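/- arXiv:2006.15308 — 3 statements merged into one kernel-verified Lean document; each statement's English description precedes it below -/
import Mathlib

section
/- In any neutrally stable configuration (μ*,b*), every incumbent type with the highest cognitive level plays an efficient profile against itself: if θ̄∈C(μ*) and n_{θ̄}=max{n_θ : θ∈C(μ*)}, then the conditional fitness of θ̄ against itself equals the efficient payoff, i.e. π(b^N_{θ̄}(θ̄), b^N_{θ̄}(θ̄)) = π̂. -/
open scoped Classical
set_option maxHeartbeats 1000000

noncomputable section

variable {A : Type} [Fintype A]

/-- Mixed strategies over a finite action set. -/
def Mixed (A : Type) [Fintype A] : Type :=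
  { p : A → ℝ // (∀ a, 0 ≤ p a) ∧ ∑ a, p a = 1 }

/-- The pure (degenerate) mixed strategy on action `a`. -/
def pureStrat (a : A) : Mixed A :=
  ⟨fun a' => if a' = a then 1 else 0, by
    refine ⟨fun a' => ?_, by simp⟩
    by_cases h : a' = a <;> simp [h]⟩

/-- Bilinear extension of a payoff function to mixed strategies. -/
def exPay (f : A → A → ℝ) (σ σ' : Mixed A) : ℝ :=
  ∑ a, ∑ a', σ.1 a * σ'.1 a' * f a a'

/-- Best replies to `σ'` under utility `u`. -/
def BR (u : A → A → ℝ) (σ' : Mixed A) : Set (Mixed A) :=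
  { σ | ∀ τ : Mixed A, exPay u τ σ' ≤ exPay u σ σ' }

/-- Undominated strategies under utility `u`: best replies to some strategy. -/
def Undom (u : A → A → ℝ) : Set (Mixed A) :=
  { σ | ∃ σ' : Mixed A, σ ∈ BR u σ' }

/-- Nash equilibria of the complete-information game induced by utilities `u`, `u'`. -/
def NE (u u' : A → A → ℝ) : Set (Mixed A × Mixed A) :=
  { p | p.1 ∈ BR u p.2 ∧ p.2 ∈ BR u' p.1 }

/-- Deception equilibria: profiles maximising the deceiver's utility `u` subject
to the deceived party (with utility `u'`) playing an undominated strategy. -/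
def DE (u u' : A → A → ℝ) : Set (Mixed A × Mixed A) :=
  { p | p.2 ∈ Undom u' ∧
      ∀ σ σ' : Mixed A, σ' ∈ Undom u' → exPay u σ σ' ≤ exPay u p.1 p.2 }

/-- Fitness-maximising deception equilibria (fitness payoff `pay`). -/
def FMDE (pay u u' : A → A → ℝ) : Set (Mixed A × Mixed A) :=
  { p | p ∈ DE u u' ∧
      ∀ σ σ' : Mixed A, σ' ∈ Undom u' → exPay pay σ σ' ≤ exPay pay p.1 p.2 }

/-- A type: a subjective utility together with a cognitive level. -/
abbrev GType (A : Type) : Type := (A → A → ℝ) × ℕ+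

/-- The environment: fitness payoffs, cognitive costs and deception probabilities. -/
structure Model (A : Type) [Fintype A] : Type where
  π : A → A → ℝ
  k : ℕ+ → ℝ
  q : ℕ+ → ℕ+ → ℝ
  k_nonneg : ∀ n, 0 ≤ k n
  k_mono : StrictMono k
  k_one : k 1 = 0
  k_tendsto : Filter.Tendsto k Filter.atTop Filter.atTop
  q_nonneg : ∀ n n', 0 ≤ q n n'
  q_le_one : ∀ n n', q n n' ≤ 1
  q_pos_iff : ∀ n n', 0 < q n n' ↔ n' < n

/-- A finite-support probability distribution over types. -/
structure TypeDist (A : Type) [Fintype A] : Type where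
  w : GType A →₀ ℝ
  nonneg : ∀ θ, 0 ≤ w θ
  total : ∑ θ ∈ w.support, w θ = 1

/-- A configuration: a type distribution together with a behaviour policy. -/
structure Config {A : Type} [Fintype A] (M : Model A) : Type where
  dist : TypeDist A
  bN : GType A → GType A → Mixed A
  bD : GType A → GType A → Mixed A
  bN_mem : ∀ θ ∈ dist.w.support, ∀ θ' ∈ dist.w.support,
    M.q θ.2 θ'.2 + M.q θ'.2 θ.2 < 1 → (bN θ θ', bN θ' θ) ∈ NE θ.1 θ'.1
  bD_mem : ∀ θ ∈ dist.w.support, ∀ θ' ∈ dist.w.support,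
    θ'.2 < θ.2 → (bD θ θ', bD θ' θ) ∈ DE θ.1 θ'.1

/-- The incumbents: the support of the type distribution. -/
def Config.supp {M : Model A} (c : Config M) : Finset (GType A) := c.dist.w.support

/-- Conditional fitness of `θ` when matched against `θ'`. -/
def condFit {M : Model A} (c : Config M) (θ θ' : GType A) : ℝ :=
  (M.q θ.2 θ'.2 + M.q θ'.2 θ.2) * exPay M.π (c.bD θ θ') (c.bD θ' θ)
    + (1 - M.q θ.2 θ'.2 - M.q θ'.2 θ.2) * exPay M.π (c.bN θ θ') (c.bN θ' θ)

/-- Expected fitness of type `θ` in configuration `c`. -/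
def expFit {M : Model A} (c : Config M) (θ : GType A) : ℝ :=
  (∑ θ' ∈ c.supp, c.dist.w θ' * condFit c θ θ') - M.k θ.2

/-- Average fitness in the population. -/
def avgFit {M : Model A} (c : Config M) : ℝ :=
  ∑ θ ∈ c.supp, c.dist.w θ * expFit c θ

/-- Payoff function of the type game induced by configuration `c`. -/
def typePay {M : Model A} (c : Config M) (θ θ' : GType A) : ℝ :=
  condFit c θ θ' - M.k θ.2

/-- Bilinear extension of a type-game payoff to finitely supported weights. -/
def playT {A : Type} [Fintype A] (F : GType A → GType A → ℝ) (x y : GType A →₀ ℝ) : ℝ :=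
  ∑ θ ∈ x.support, ∑ θ' ∈ y.support, x θ * y θ' * F θ θ'

/-- `μ` is a neutrally stable strategy of the symmetric game with pure-strategy
set `S` and payoff `F`. -/
def IsNSSOn (F : GType A → GType A → ℝ) (S : Finset (GType A)) (μ : TypeDist A) : Prop :=
  ∀ ν : TypeDist A, ν.w.support ⊆ S →
    ∃ εb : ℝ, εb ∈ Set.Ioo (0:ℝ) 1 ∧ ∀ ε ∈ Set.Ioo (0:ℝ) εb,
      playT F ν.w ((1 - ε) • μ.w + ε • ν.w) ≤ playT F μ.w ((1 - ε) • μ.w + ε • ν.w)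

/-- `ct` is focal with respect to `c`. -/
def Focal {M : Model A} (c ct : Config M) : Prop :=
  c.supp ⊆ ct.supp ∧
    ∀ θ ∈ c.supp, ∀ θ' ∈ c.supp, ct.bN θ θ' = c.bN θ θ' ∧ ct.bD θ θ' = c.bD θ θ'

/-- Neutrally stable configuration. -/
def IsNSC {M : Model A} (c : Config M) : Prop :=
  ∀ μ' : TypeDist A, ∃ εb : ℝ, εb ∈ Set.Ioo (0:ℝ) 1 ∧ ∀ ε ∈ Set.Ioo (0:ℝ) εb,
    ∀ ct : Config M, Focal c ct → ct.dist.w = (1 - ε) • c.dist.w + ε • μ'.w →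
      IsNSSOn (typePay ct) ct.supp c.dist

/-- The efficient payoff `π̂`. -/
def effPay (M : Model A) [Nonempty A] : ℝ :=
  Finset.univ.sup' Finset.univ_nonempty
    (fun p : A × A => (M.π p.1 p.2 + M.π p.2 p.1) / 2)

/-- The deviation gain of action `a`. -/
def devGain (M : Model A) [Nonempty A] (a : A) : ℝ :=
  (Finset.univ.sup' Finset.univ_nonempty fun a' => M.π a' a) - M.π a a

/-- The effective cost of deception `c = min_{n ≥ 2} k_n / q(n,1)`. -/
def effCost (M : Model A) : ℝ :=
  ⨅ n : { m : ℕ+ // 2 ≤ m }, M.k n.1 / M.q n.1 1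

/-- Pure configuration with outcome `a`. -/
def IsPureCfg {M : Model A} (c : Config M) (a : A) : Prop :=
  ∀ θ ∈ c.supp, ∀ θ' ∈ c.supp,
    (M.q θ.2 θ'.2 + M.q θ'.2 θ.2 < 1 → c.bN θ θ' = pureStrat a) ∧
    (0 < M.q θ.2 θ'.2 → c.bD θ θ' = pureStrat a)

/-- Genericity of a symmetric game. -/
def Generic (pay : A → A → ℝ) : Prop :=
  ∀ a a' b b' : A, ({a, a'} : Finset A) ≠ {b, b'} →
    pay a a' ≠ pay b b' ∧ pay a a' + pay a' a ≠ pay b b' + pay b' b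

/-- The pure maxmin value. -/
def maxminVal (M : Model A) [Nonempty A] : ℝ :=
  Finset.univ.sup' Finset.univ_nonempty fun a =>
    Finset.univ.inf' Finset.univ_nonempty fun a' => M.π a a'


-- ==================== auxiliary lemmas ====================

lemma zexPay_const (r : ℝ) (σ σ' : Mixed A) : exPay (fun _ _ => r) σ σ' = r := by
  unfold exPay
  have h1 : ∀ a : A, ∑ a' : A, σ.1 a * σ'.1 a' * r = σ.1 a * r := by
    intro a
    rw [← Finset.sum_mul, ← Finset.mul_sum, σ'.2.2, mul_one]
  simp_rw [h1]
  rw [← Finset.sum_mul, σ.2.2, one_mul]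

lemma zexPay_shift (u : A → A → ℝ) (r : ℝ) (σ σ' : Mixed A) :
    exPay (fun a b => u a b + r) σ σ' = exPay u σ σ' + r := by
  unfold exPay
  have h1 : ∀ a : A, ∑ a' : A, σ.1 a * σ'.1 a' * (u a a' + r)
      = (∑ a' : A, σ.1 a * σ'.1 a' * u a a') + σ.1 a * r := by
    intro a
    have e1 : ∀ a' : A, σ.1 a * σ'.1 a' * (u a a' + r)
        = σ.1 a * σ'.1 a' * u a a' + σ.1 a * σ'.1 a' * r := fun a' => by ring
    simp_rw [e1]
    rw [Finset.sum_add_distrib]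
    congr 1
    have e2 : ∀ a' : A, σ.1 a * σ'.1 a' * r = σ.1 a * (σ'.1 a' * r) := fun a' => by ring
    simp_rw [e2]
    rw [← Finset.mul_sum, ← Finset.sum_mul, σ'.2.2, one_mul]
  simp_rw [h1]
  rw [Finset.sum_add_distrib, ← Finset.sum_mul, σ.2.2, one_mul]

lemma zBR_shift (u : A → A → ℝ) (r : ℝ) (σ' : Mixed A) :
    BR (fun a b => u a b + r) σ' = BR u σ' := by
  ext σ
  constructor <;> intro h τ <;> have := h τ <;> rw [zexPay_shift, zexPay_shift] at * <;> linarith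

lemma zUndom_shift (u : A → A → ℝ) (r : ℝ) :
    Undom (fun a b => u a b + r) = Undom u := by
  unfold Undom
  ext σ
  simp_rw [zBR_shift]

lemma zBR_const (r : ℝ) (σ σ' : Mixed A) : σ ∈ BR (fun _ _ => r) σ' := by
  intro τ
  rw [zexPay_const, zexPay_const]

lemma zDE_const (r : ℝ) (u' : A → A → ℝ) (p : Mixed A × Mixed A)
    (h : p.2 ∈ Undom u') : p ∈ DE (fun _ _ => r) u' := by
  refine ⟨h, fun σ σ' _ => ?_⟩
  rw [zexPay_const, zexPay_const]

lemma zDE_shift_left (u u' : A → A → ℝ) (r : ℝ) (p : Mixed A × Mixed A)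
    (h : p ∈ DE u u') : p ∈ DE (fun a b => u a b + r) u' := by
  refine ⟨h.1, fun σ σ' hσ' => ?_⟩
  rw [zexPay_shift, zexPay_shift]
  linarith [h.2 σ σ' hσ']

lemma zDE_undom (u u₁ u₂ : A → A → ℝ) (h : Undom u₁ = Undom u₂) :
    DE u u₁ = DE u u₂ := by
  unfold DE
  rw [h]

lemma zexPay_pure (f : A → A → ℝ) (a b : A) :
    exPay f (pureStrat a) (pureStrat b) = f a b := by
  unfold exPay pureStrat
  rw [Finset.sum_eq_single a]
  · rw [Finset.sum_eq_single b]
    · simp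
    · intro b' _ hb'
      simp [hb']
    · intro h
      exact absurd (Finset.mem_univ b) h
  · intro a' _ ha'
    simp [ha']
  · intro h
    exact absurd (Finset.mem_univ a) h

lemma zsym_le (π : A → A → ℝ) (σ : A → ℝ) (hσ1 : ∀ a, 0 ≤ σ a) (hσ2 : ∑ a, σ a = 1)
    (c : ℝ) (hc : ∀ x y : A, π x y + π y x ≤ 2 * c) :
    ∑ x, ∑ y, σ x * σ y * π x y ≤ c := by
  have hswap : ∑ x, ∑ y, σ x * σ y * π x y = ∑ x, ∑ y, σ x * σ y * π y x := by
    rw [Finset.sum_comm]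
    exact Finset.sum_congr rfl fun x _ => Finset.sum_congr rfl fun y _ => by ring
  have h2 : 2 * (∑ x, ∑ y, σ x * σ y * π x y)
      = ∑ x, ∑ y, σ x * σ y * (π x y + π y x) := by
    rw [two_mul]
    nth_rewrite 2 [hswap]
    rw [← Finset.sum_add_distrib]
    refine Finset.sum_congr rfl fun x _ => ?_
    rw [← Finset.sum_add_distrib]
    exact Finset.sum_congr rfl fun y _ => by ring
  have h3 : ∑ x, ∑ y, σ x * σ y * (π x y + π y x) ≤ ∑ x : A, ∑ y : A, σ x * σ y * (2 * c) := by
    refine Finset.sum_le_sum fun x _ => Finset.sum_le_sum fun y _ => ?_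
    exact mul_le_mul_of_nonneg_left (hc x y) (mul_nonneg (hσ1 x) (hσ1 y))
  have h4 : ∑ x : A, ∑ y : A, σ x * σ y * (2 * c) = 2 * c := by
    have e : ∀ x : A, ∑ y : A, σ x * σ y * (2 * c) = σ x * (2 * c) := by
      intro x
      rw [← Finset.sum_mul, ← Finset.mul_sum, hσ2, mul_one]
    simp_rw [e]
    rw [← Finset.sum_mul, hσ2, one_mul]
  linarith

lemma zplayT_pad (F : GType A → GType A → ℝ) (x y : GType A →₀ ℝ)
    {T T' : Finset (GType A)} (hT : x.support ⊆ T) (hT' : y.support ⊆ T') :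
    playT F x y = ∑ p ∈ T, ∑ q ∈ T', x p * y q * F p q := by
  unfold playT
  rw [Finset.sum_subset hT]
  · refine Finset.sum_congr rfl fun p _ => ?_
    rw [Finset.sum_subset hT']
    intro q _ hq
    rw [Finsupp.notMem_support_iff.1 hq]
    ring
  · intro p _ hp
    rw [Finsupp.notMem_support_iff.1 hp]
    exact Finset.sum_eq_zero fun q _ => by ring

lemma zplayT_addL (F : GType A → GType A → ℝ) (x x' y : GType A →₀ ℝ) :
    playT F (x + x') y = playT F x y + playT F x' y := by
  rw [zplayT_pad F (x + x') y (T := x.support ∪ x'.support) (T' := y.support)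
      Finsupp.support_add subset_rfl,
    zplayT_pad F x y (T := x.support ∪ x'.support) (T' := y.support)
      Finset.subset_union_left subset_rfl,
    zplayT_pad F x' y (T := x.support ∪ x'.support) (T' := y.support)
      Finset.subset_union_right subset_rfl,
    ← Finset.sum_add_distrib]
  refine Finset.sum_congr rfl fun p _ => ?_
  rw [← Finset.sum_add_distrib]
  refine Finset.sum_congr rfl fun q _ => ?_
  rw [Finsupp.add_apply]
  ring

lemma zplayT_addR (F : GType A → GType A → ℝ) (x y y' : GType A →₀ ℝ) :
    playT F x (y + y') = playT F x y + playT F x y' := by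
  rw [zplayT_pad F x (y + y') (T := x.support) (T' := y.support ∪ y'.support)
      subset_rfl Finsupp.support_add,
    zplayT_pad F x y (T := x.support) (T' := y.support ∪ y'.support)
      subset_rfl Finset.subset_union_left,
    zplayT_pad F x y' (T := x.support) (T' := y.support ∪ y'.support)
      subset_rfl Finset.subset_union_right,
    ← Finset.sum_add_distrib]
  refine Finset.sum_congr rfl fun p _ => ?_
  rw [← Finset.sum_add_distrib]
  refine Finset.sum_congr rfl fun q _ => ?_
  rw [Finsupp.add_apply]
  ring

lemma zplayT_zeroL (F : GType A → GType A → ℝ) (y : GType A →₀ ℝ) :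
    playT F 0 y = 0 := by
  unfold playT
  simp

lemma zplayT_zeroR (F : GType A → GType A → ℝ) (x : GType A →₀ ℝ) :
    playT F x 0 = 0 := by
  unfold playT
  simp

lemma zplayT_sumL {ι : Type*} (F : GType A → GType A → ℝ) (s : Finset ι)
    (g : ι → (GType A →₀ ℝ)) (y : GType A →₀ ℝ) :
    playT F (∑ i ∈ s, g i) y = ∑ i ∈ s, playT F (g i) y := by
  induction s using Finset.cons_induction with
  | empty => simp [zplayT_zeroL]
  | cons a s ha ih => rw [Finset.sum_cons, Finset.sum_cons, zplayT_addL, ih]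

lemma zplayT_sumR {ι : Type*} (F : GType A → GType A → ℝ) (s : Finset ι)
    (g : ι → (GType A →₀ ℝ)) (x : GType A →₀ ℝ) :
    playT F x (∑ i ∈ s, g i) = ∑ i ∈ s, playT F x (g i) := by
  induction s using Finset.cons_induction with
  | empty => simp [zplayT_zeroR]
  | cons a s ha ih => rw [Finset.sum_cons, Finset.sum_cons, zplayT_addR, ih]

lemma zplayT_singleL (F : GType A → GType A → ℝ) (p : GType A) (a : ℝ) (y : GType A →₀ ℝ) :
    playT F (Finsupp.single p a) y = a * ∑ q ∈ y.support, y q * F p q := by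
  rw [zplayT_pad F _ y (T := {p}) (T' := y.support) Finsupp.support_single_subset subset_rfl,
    Finset.sum_singleton, Finsupp.single_eq_same, Finset.mul_sum]
  exact Finset.sum_congr rfl fun q _ => by ring

lemma zplayT_singleR (F : GType A → GType A → ℝ) (p : GType A) (a : ℝ) (x : GType A →₀ ℝ) :
    playT F x (Finsupp.single p a) = a * ∑ q ∈ x.support, x q * F q p := by
  rw [zplayT_pad F x _ (T := x.support) (T' := {p}) subset_rfl Finsupp.support_single_subset,
    Finset.mul_sum]
  refine Finset.sum_congr rfl fun q _ => ?_
  rw [Finset.sum_singleton, Finsupp.single_eq_same]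
  ring

lemma zplayT_single_single (F : GType A → GType A → ℝ) (p q : GType A) (a b : ℝ) :
    playT F (Finsupp.single p a) (Finsupp.single q b) = a * b * F p q := by
  rw [zplayT_pad F _ _ (T := {p}) (T' := {q}) Finsupp.support_single_subset
    Finsupp.support_single_subset, Finset.sum_singleton, Finset.sum_singleton,
    Finsupp.single_eq_same, Finsupp.single_eq_same]

lemma zplayT_combR (F : GType A → GType A → ℝ) (x y z : GType A →₀ ℝ) (a b : ℝ) :
    playT F x (a • y + b • z) = a * playT F x y + b * playT F x z := by
  have hsub : (a • y + b • z).support ⊆ y.support ∪ z.support := by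
    refine subset_trans Finsupp.support_add ?_
    exact Finset.union_subset_union Finsupp.support_smul Finsupp.support_smul
  rw [zplayT_pad F x _ (T := x.support) (T' := y.support ∪ z.support) subset_rfl hsub,
    zplayT_pad F x y (T := x.support) (T' := y.support ∪ z.support) subset_rfl
      Finset.subset_union_left,
    zplayT_pad F x z (T := x.support) (T' := y.support ∪ z.support) subset_rfl
      Finset.subset_union_right,
    Finset.mul_sum, Finset.mul_sum, ← Finset.sum_add_distrib]
  refine Finset.sum_congr rfl fun p _ => ?_
  rw [Finset.mul_sum, Finset.mul_sum, ← Finset.sum_add_distrib]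
  refine Finset.sum_congr rfl fun q _ => ?_
  rw [Finsupp.add_apply, Finsupp.smul_apply, Finsupp.smul_apply, smul_eq_mul, smul_eq_mul]
  ring

lemma zq_self (M : Model A) (n : ℕ+) : M.q n n = 0 := by
  have h1 : ¬ 0 < M.q n n := fun h => absurd ((M.q_pos_iff n n).1 h) (lt_irrefl n)
  linarith [M.q_nonneg n n]

-- ==================== the mimicry construction ====================

def zClone (sh : ℝ) (θ : GType A) : GType A := ((fun a b => θ.1 a b + sh), θ.2)

def zG (dd : ℝ) (n2 : ℕ+) (i : ℕ) : GType A := ((fun _ _ => dd + (i : ℝ)), n2)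

def zIsC (mm : ℕ) (dd : ℝ) (n2 : ℕ+) (τ : GType A) : Prop :=
  ∃ i, i < mm ∧ τ = zG dd n2 i

def zProj (S : Finset (GType A)) (mm : ℕ) (sh dd : ℝ) (θbar : GType A)
    (τ : GType A) : GType A :=
  if zIsC mm dd θbar.2 τ then θbar
  else if τ ∈ S then τ else ((fun a b => τ.1 a b - sh), τ.2)

def zBB (S : Finset (GType A)) (mm : ℕ) (sh dd : ℝ) (θbar : GType A) (a₀ a1 a2 : A)
    (base : GType A → GType A → Mixed A) (τ τ' : GType A) : Mixed A :=
  if zIsC mm dd θbar.2 τ ∧ zIsC mm dd θbar.2 τ' then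
    (if τ.1 a₀ a₀ < τ'.1 a₀ a₀ then pureStrat a1 else pureStrat a2)
  else base (zProj S mm sh dd θbar τ) (zProj S mm sh dd θbar τ')

/-- In any NSC, every incumbent type with the highest cognitive
level plays an efficient profile against itself. -/
theorem stmt0 [Nonempty A] (hA : 3 ≤ Fintype.card A) (M : Model A)
    (c : Config M) (hNSC : IsNSC c)
    (θbar : GType A) (hmem : θbar ∈ c.supp)
    (hmax : ∀ θ ∈ c.supp, θ.2 ≤ θbar.2) :
    exPay M.π (c.bN θbar θbar) (c.bN θbar θbar) = effPay M := by
  classical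
  obtain ⟨phat, -, hphat⟩ := Finset.exists_mem_eq_sup'
    (Finset.univ_nonempty (α := A × A)) (fun p : A × A => (M.π p.1 p.2 + M.π p.2 p.1) / 2)
  have hpair : ∀ x y : A, M.π x y + M.π y x ≤ 2 * effPay M := by
    intro x y
    have h := Finset.le_sup' (fun p : A × A => (M.π p.1 p.2 + M.π p.2 p.1) / 2)
      (Finset.mem_univ (x, y))
    unfold effPay
    linarith
  have hle : exPay M.π (c.bN θbar θbar) (c.bN θbar θbar) ≤ effPay M := by
    unfold exPay
    exact zsym_le M.π (c.bN θbar θbar).1 (c.bN θbar θbar).2.1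
      (c.bN θbar θbar).2.2 (effPay M) hpair
  have hmem' : θbar ∈ c.dist.w.support := hmem
  have hμpos : 0 < c.dist.w θbar :=
    lt_of_le_of_ne (c.dist.nonneg θbar) (Ne.symm (Finsupp.mem_support_iff.1 hmem'))
  have hphat' : effPay M = (M.π phat.1 phat.2 + M.π phat.2 phat.1) / 2 := hphat
  have hS2 : M.π phat.1 phat.2 + M.π phat.2 phat.1 = 2 * effPay M := by
    rw [hphat']
    ring
  have key : ∀ mm : ℕ, 0 < mm →
      (mm : ℝ) * (effPay M - exPay M.π (c.bN θbar θbar) (c.bN θbar θbar))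
        ≤ effPay M - M.π phat.2 phat.2 := by
    intro mm hmm
    have hmmR : (0 : ℝ) < (mm : ℝ) := by exact_mod_cast hmm
    have hmmne : (mm : ℝ) ≠ 0 := ne_of_gt hmmR
    set a₀ : A := Classical.arbitrary A with ha₀
    -- fresh shift constant
    obtain ⟨sh, hsh⟩ := Infinite.exists_notMem_finset
      ((c.dist.w.support ×ˢ c.dist.w.support).image
        fun pr : GType A × GType A => pr.2.1 a₀ a₀ - pr.1.1 a₀ a₀)
    have hclone_not : ∀ θ ∈ c.dist.w.support, zClone sh θ ∉ c.dist.w.support := by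
      intro θ hθ hcl
      refine hsh (Finset.mem_image.2 ⟨(θ, zClone sh θ), Finset.mem_product.2 ⟨hθ, hcl⟩, ?_⟩)
      show (zClone sh θ).1 a₀ a₀ - θ.1 a₀ a₀ = sh
      show θ.1 a₀ a₀ + sh - θ.1 a₀ a₀ = sh
      ring
    -- fresh base constant for the cycle types
    obtain ⟨dd, hdd⟩ := Infinite.exists_notMem_finset
      (((c.dist.w.support ∪ c.dist.w.support.image (zClone sh)) ×ˢ Finset.range mm).image
        fun pr : GType A × ℕ => pr.1.1 a₀ a₀ - (pr.2 : ℝ))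
    have hg_not : ∀ i, i < mm →
        zG dd θbar.2 i ∉ c.dist.w.support ∪ c.dist.w.support.image (zClone sh) := by
      intro i hi hgi
      refine hdd (Finset.mem_image.2 ⟨(zG dd θbar.2 i, i),
        Finset.mem_product.2 ⟨hgi, Finset.mem_range.2 hi⟩, ?_⟩)
      show (zG dd θbar.2 i).1 a₀ a₀ - (i : ℝ) = dd
      show dd + (i : ℝ) - (i : ℝ) = dd
      ring
    have hg_notS : ∀ i, i < mm → zG dd θbar.2 i ∉ c.dist.w.support :=
      fun i hi h => hg_not i hi (Finset.mem_union_left _ h)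
    have hg_ncl : ∀ i, i < mm → ∀ θ ∈ c.dist.w.support, zG dd θbar.2 i ≠ zClone sh θ := by
      intro i hi θ hθ he
      exact hg_not i hi (Finset.mem_union_right _ (Finset.mem_image.2 ⟨θ, hθ, he.symm⟩))
    have hSnotC : ∀ τ ∈ c.dist.w.support, ¬ zIsC mm dd θbar.2 τ := by
      rintro τ hτ ⟨i, hi, rfl⟩
      exact hg_notS i hi hτ
    have hClnotC : ∀ θ ∈ c.dist.w.support, ¬ zIsC mm dd θbar.2 (zClone sh θ) := by
      rintro θ hθ ⟨i, hi, he⟩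
      exact hg_ncl i hi θ hθ he.symm
    -- projection evaluation
    have hprojS : ∀ τ ∈ c.dist.w.support, zProj c.dist.w.support mm sh dd θbar τ = τ := by
      intro τ hτ
      unfold zProj
      rw [if_neg (hSnotC τ hτ), if_pos hτ]
    have hprojC : ∀ θ ∈ c.dist.w.support,
        zProj c.dist.w.support mm sh dd θbar (zClone sh θ) = θ := by
      intro θ hθ
      unfold zProj
      rw [if_neg (hClnotC θ hθ), if_neg (hclone_not θ hθ)]
      have h1 : (fun a b => (zClone sh θ).1 a b - sh) = θ.1 := by
        funext a b
        show θ.1 a b + sh - sh = θ.1 a b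
        ring
      show ((fun a b => (zClone sh θ).1 a b - sh), θ.2) = θ
      rw [h1]
    have hprojG : ∀ i, i < mm →
        zProj c.dist.w.support mm sh dd θbar (zG dd θbar.2 i) = θbar := by
      intro i hi
      unfold zProj
      rw [if_pos ⟨i, hi, rfl⟩]
    -- behaviour evaluation
    have hBB_nc : ∀ (base : GType A → GType A → Mixed A) (τ τ' : GType A),
        ¬(zIsC mm dd θbar.2 τ ∧ zIsC mm dd θbar.2 τ') →
        zBB c.dist.w.support mm sh dd θbar a₀ phat.1 phat.2 base τ τ'
          = base (zProj c.dist.w.support mm sh dd θbar τ)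
              (zProj c.dist.w.support mm sh dd θbar τ') := by
      intro base τ τ' h
      unfold zBB
      rw [if_neg h]
    have hBB_SS : ∀ (base : GType A → GType A → Mixed A),
        ∀ θ ∈ c.dist.w.support, ∀ θ' ∈ c.dist.w.support,
        zBB c.dist.w.support mm sh dd θbar a₀ phat.1 phat.2 base θ θ' = base θ θ' := by
      intro base θ hθ θ' hθ'
      rw [hBB_nc base θ θ' (fun h => hSnotC θ hθ h.1), hprojS θ hθ, hprojS θ' hθ']
    have hBB_GG : ∀ (base : GType A → GType A → Mixed A), ∀ i, i < mm → ∀ j, j < mm →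
        zBB c.dist.w.support mm sh dd θbar a₀ phat.1 phat.2 base
          (zG dd θbar.2 i) (zG dd θbar.2 j)
          = if i < j then pureStrat phat.1 else pureStrat phat.2 := by
      intro base i hi j hj
      unfold zBB
      rw [if_pos ⟨⟨i, hi, rfl⟩, ⟨j, hj, rfl⟩⟩]
      by_cases hij : i < j
      · rw [if_pos hij, if_pos]
        show dd + (i : ℝ) < dd + (j : ℝ)
        have : (i : ℝ) < (j : ℝ) := by exact_mod_cast hij
        linarith
      · rw [if_neg hij, if_neg]
        show ¬ (dd + (i : ℝ) < dd + (j : ℝ))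
        have : ¬ ((i : ℝ) < (j : ℝ)) := by exact_mod_cast hij
        intro hc
        exact this (by linarith)
    -- the mutant distribution ν
    set w1 : GType A →₀ ℝ :=
      ∑ θ ∈ c.dist.w.support.erase θbar, Finsupp.single (zClone sh θ) (c.dist.w θ) with hw1
    set w2 : GType A →₀ ℝ :=
      ∑ i ∈ Finset.range mm, Finsupp.single (zG dd θbar.2 i) (c.dist.w θbar / mm) with hw2
    have hw1app : ∀ τ, w1 τ
        = ∑ θ ∈ c.dist.w.support.erase θbar, Finsupp.single (zClone sh θ) (c.dist.w θ) τ := by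
      intro τ
      rw [hw1]
      exact Finsupp.finset_sum_apply _ _ _
    have hw2app : ∀ τ, w2 τ
        = ∑ i ∈ Finset.range mm, Finsupp.single (zG dd θbar.2 i) (c.dist.w θbar / mm) τ := by
      intro τ
      rw [hw2]
      exact Finsupp.finset_sum_apply _ _ _
    have hν_nonneg : ∀ τ, 0 ≤ (w1 + w2) τ := by
      intro τ
      rw [Finsupp.add_apply, hw1app, hw2app]
      refine add_nonneg (Finset.sum_nonneg fun θ _ => ?_) (Finset.sum_nonneg fun i _ => ?_)
      · rw [Finsupp.single_apply]
        split_ifs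
        · exact c.dist.nonneg θ
        · exact le_refl 0
      · rw [Finsupp.single_apply]
        split_ifs
        · exact div_nonneg (c.dist.nonneg θbar) (le_of_lt hmmR)
        · exact le_refl 0
    have hw1supp : w1.support ⊆ (c.dist.w.support.erase θbar).image (zClone sh) := by
      rw [hw1]
      refine subset_trans Finsupp.support_finset_sum ?_
      intro τ hτ
      obtain ⟨θ, hθ, hτ2⟩ := Finset.mem_biUnion.1 hτ
      have := Finsupp.support_single_subset hτ2
      rw [Finset.mem_singleton] at this
      exact Finset.mem_image.2 ⟨θ, hθ, this.symm⟩
    have hw2supp : w2.support ⊆ (Finset.range mm).image (zG dd θbar.2) := by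
      rw [hw2]
      refine subset_trans Finsupp.support_finset_sum ?_
      intro τ hτ
      obtain ⟨i, hi, hτ2⟩ := Finset.mem_biUnion.1 hτ
      have := Finsupp.support_single_subset hτ2
      rw [Finset.mem_singleton] at this
      exact Finset.mem_image.2 ⟨i, hi, this.symm⟩
    have hsingle_sum : ∀ (U : Finset (GType A)) (p : GType A) (a : ℝ), p ∈ U →
        ∑ τ ∈ U, Finsupp.single p a τ = a := by
      intro U p a hp
      rw [Finset.sum_eq_single_of_mem p hp]
      · exact Finsupp.single_eq_same
      · intro τ _ hne
        exact Finsupp.single_eq_of_ne hne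
    have hErase : ∑ θ ∈ c.dist.w.support.erase θbar, c.dist.w θ + c.dist.w θbar = 1 := by
      rw [Finset.sum_erase_add c.dist.w.support _ hmem']
      exact c.dist.total
    have hν_total : ∑ τ ∈ (w1 + w2).support, (w1 + w2) τ = 1 := by
      have hsub : (w1 + w2).support ⊆
          (c.dist.w.support.erase θbar).image (zClone sh)
            ∪ (Finset.range mm).image (zG dd θbar.2) :=
        subset_trans Finsupp.support_add (Finset.union_subset_union hw1supp hw2supp)
      rw [Finset.sum_subset hsub (fun τ _ h => Finsupp.notMem_support_iff.1 h)]
      simp only [Finsupp.add_apply]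
      rw [Finset.sum_add_distrib]
      have h1 : ∑ τ ∈ (c.dist.w.support.erase θbar).image (zClone sh)
            ∪ (Finset.range mm).image (zG dd θbar.2), w1 τ
          = ∑ θ ∈ c.dist.w.support.erase θbar, c.dist.w θ := by
        rw [Finset.sum_congr rfl fun τ _ => hw1app τ, Finset.sum_comm]
        refine Finset.sum_congr rfl fun θ hθ => ?_
        exact hsingle_sum _ _ _
          (Finset.mem_union_left _ (Finset.mem_image_of_mem _ hθ))
      have h2 : ∑ τ ∈ (c.dist.w.support.erase θbar).image (zClone sh)
            ∪ (Finset.range mm).image (zG dd θbar.2), w2 τ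
          = (mm : ℝ) * (c.dist.w θbar / mm) := by
        rw [Finset.sum_congr rfl fun τ _ => hw2app τ, Finset.sum_comm]
        rw [Finset.sum_congr rfl (fun i hi => hsingle_sum _ _ _
          (Finset.mem_union_right _ (Finset.mem_image_of_mem _ hi)))]
        rw [Finset.sum_const, Finset.card_range, nsmul_eq_mul]
      rw [h1, h2, mul_div_cancel₀ _ hmmne]
      exact hErase
    set ν : TypeDist A := ⟨w1 + w2, hν_nonneg, hν_total⟩ with hν
    -- get the stability bound from the NSC
    obtain ⟨εb, hεb, hstab⟩ := hNSC ν
    have hε : εb / 2 ∈ Set.Ioo (0 : ℝ) εb := ⟨by linarith [hεb.1], by linarith [hεb.1]⟩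
    have hε1 : (0 : ℝ) < 1 - εb / 2 := by
      have := hεb.2
      linarith
    -- the post-entry weights
    set ctw : GType A →₀ ℝ := (1 - εb / 2) • c.dist.w + (εb / 2) • (w1 + w2) with hctw
    have hctwapp : ∀ τ, ctw τ = (1 - εb / 2) * c.dist.w τ + (εb / 2) * (w1 + w2) τ := by
      intro τ
      rw [hctw, Finsupp.add_apply, Finsupp.smul_apply, Finsupp.smul_apply,
        smul_eq_mul, smul_eq_mul]
    have hctw_nonneg : ∀ τ, 0 ≤ ctw τ := by
      intro τ
      rw [hctwapp]
      exact add_nonneg (mul_nonneg (le_of_lt hε1) (c.dist.nonneg τ))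
        (mul_nonneg (by linarith [hεb.1]) (hν_nonneg τ))
    have hposS : ∀ τ ∈ c.dist.w.support, 0 < ctw τ := by
      intro τ hτ
      have h1 : 0 < c.dist.w τ :=
        lt_of_le_of_ne (c.dist.nonneg τ) (Ne.symm (Finsupp.mem_support_iff.1 hτ))
      rw [hctwapp]
      have := hν_nonneg τ
      nlinarith [hεb.1]
    have hposν : ∀ τ ∈ (w1 + w2).support, 0 < ctw τ := by
      intro τ hτ
      have h1 : 0 < (w1 + w2) τ :=
        lt_of_le_of_ne (hν_nonneg τ) (Ne.symm (Finsupp.mem_support_iff.1 hτ))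
      rw [hctwapp]
      have := c.dist.nonneg τ
      nlinarith [hεb.1]
    have hsupp_sub : ctw.support ⊆ c.dist.w.support ∪ (w1 + w2).support := by
      rw [hctw]
      refine subset_trans Finsupp.support_add ?_
      exact Finset.union_subset_union Finsupp.support_smul Finsupp.support_smul
    have hctw_total : ∑ τ ∈ ctw.support, ctw τ = 1 := by
      have hsupp_eq : ctw.support = c.dist.w.support ∪ (w1 + w2).support := by
        refine subset_antisymm hsupp_sub ?_
        intro τ hτ
        rcases Finset.mem_union.1 hτ with h | h
        · exact Finsupp.mem_support_iff.2 (ne_of_gt (hposS τ h))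
        · exact Finsupp.mem_support_iff.2 (ne_of_gt (hposν τ h))
      rw [hsupp_eq]
      have hTμ : ∑ τ ∈ c.dist.w.support ∪ (w1 + w2).support, c.dist.w τ = 1 := by
        rw [← Finset.sum_subset Finset.subset_union_left
          (fun τ _ h => Finsupp.notMem_support_iff.1 h)]
        exact c.dist.total
      have hTν : ∑ τ ∈ c.dist.w.support ∪ (w1 + w2).support, (w1 + w2) τ = 1 := by
        rw [← Finset.sum_subset Finset.subset_union_right
          (fun τ _ h => Finsupp.notMem_support_iff.1 h)]
        exact hν_total
      calc ∑ τ ∈ c.dist.w.support ∪ (w1 + w2).support, ctw τ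
          = ∑ τ ∈ c.dist.w.support ∪ (w1 + w2).support,
              ((1 - εb / 2) * c.dist.w τ + (εb / 2) * (w1 + w2) τ) :=
            Finset.sum_congr rfl fun τ _ => hctwapp τ
        _ = (1 - εb / 2) * (∑ τ ∈ c.dist.w.support ∪ (w1 + w2).support, c.dist.w τ)
              + (εb / 2) * (∑ τ ∈ c.dist.w.support ∪ (w1 + w2).support, (w1 + w2) τ) := by
            rw [Finset.sum_add_distrib, Finset.mul_sum, Finset.mul_sum]
        _ = 1 := by rw [hTμ, hTν]; ring
    -- categorisation of the support
    have hcat : ∀ τ ∈ ctw.support, τ ∈ c.dist.w.support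
        ∨ (∃ θ, θ ∈ c.dist.w.support.erase θbar ∧ τ = zClone sh θ)
        ∨ (∃ i, i < mm ∧ τ = zG dd θbar.2 i) := by
      intro τ hτ
      rcases Finset.mem_union.1 (hsupp_sub hτ) with h | h
      · exact Or.inl h
      · rcases Finset.mem_union.1 (Finsupp.support_add h) with h1 | h2
        · obtain ⟨θ, hθ, he⟩ := Finset.mem_image.1 (hw1supp h1)
          exact Or.inr (Or.inl ⟨θ, hθ, he.symm⟩)
        · obtain ⟨i, hi, he⟩ := Finset.mem_image.1 (hw2supp h2)
          exact Or.inr (Or.inr ⟨i, Finset.mem_range.1 hi, he.symm⟩)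
    have hlev_all : ∀ τ ∈ ctw.support, τ.2 ≤ θbar.2
        ∧ zProj c.dist.w.support mm sh dd θbar τ ∈ c.dist.w.support
        ∧ (zProj c.dist.w.support mm sh dd θbar τ).2 = τ.2 := by
      intro τ hτ
      rcases hcat τ hτ with hS | ⟨θ, hθE, rfl⟩ | ⟨i, hi, rfl⟩
      · refine ⟨hmax τ hS, ?_, ?_⟩
        · rw [hprojS τ hS]
          exact hS
        · rw [hprojS τ hS]
      · have hθS := Finset.mem_of_mem_erase hθE
        refine ⟨hmax θ hθS, ?_, ?_⟩
        · rw [hprojC θ hθS]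
          exact hθS
        · rw [hprojC θ hθS]
          rfl
      · refine ⟨le_refl _, ?_, ?_⟩
        · rw [hprojG i hi]
          exact hmem'
        · rw [hprojG i hi]
          rfl
    -- transfer lemmas
    have hBR_tr : ∀ τ ∈ ctw.support, ∀ (x y : Mixed A),
        x ∈ BR (zProj c.dist.w.support mm sh dd θbar τ).1 y → x ∈ BR τ.1 y := by
      intro τ hτ x y hx
      rcases hcat τ hτ with hS | ⟨θ, hθE, rfl⟩ | ⟨i, hi, rfl⟩
      · rwa [hprojS τ hS] at hx
      · rw [hprojC θ (Finset.mem_of_mem_erase hθE)] at hx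
        show x ∈ BR (fun a b => θ.1 a b + sh) y
        rw [zBR_shift]
        exact hx
      · exact zBR_const _ _ _
    have hUnd_tr : ∀ τ ∈ ctw.support, ¬ zIsC mm dd θbar.2 τ →
        Undom τ.1 = Undom (zProj c.dist.w.support mm sh dd θbar τ).1 := by
      intro τ hτ hnc
      rcases hcat τ hτ with hS | ⟨θ, hθE, rfl⟩ | ⟨i, hi, rfl⟩
      · rw [hprojS τ hS]
      · rw [hprojC θ (Finset.mem_of_mem_erase hθE)]
        exact zUndom_shift θ.1 sh
      · exact absurd ⟨i, hi, rfl⟩ hnc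
    have hDE_tr : ∀ τ ∈ ctw.support, ∀ (u' : A → A → ℝ) (pq : Mixed A × Mixed A),
        pq ∈ DE (zProj c.dist.w.support mm sh dd θbar τ).1 u' → pq ∈ DE τ.1 u' := by
      intro τ hτ u' pq hpq
      rcases hcat τ hτ with hS | ⟨θ, hθE, rfl⟩ | ⟨i, hi, rfl⟩
      · rwa [hprojS τ hS] at hpq
      · rw [hprojC θ (Finset.mem_of_mem_erase hθE)] at hpq
        exact zDE_shift_left _ _ _ _ hpq
      · exact zDE_const _ _ _ hpq.1
    -- equilibrium membership for the post-entry configuration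
    have hbN : ∀ τ ∈ ctw.support, ∀ τ' ∈ ctw.support,
        M.q τ.2 τ'.2 + M.q τ'.2 τ.2 < 1 →
        (zBB c.dist.w.support mm sh dd θbar a₀ phat.1 phat.2 c.bN τ τ',
          zBB c.dist.w.support mm sh dd θbar a₀ phat.1 phat.2 c.bN τ' τ) ∈ NE τ.1 τ'.1 := by
      intro τ hτ τ' hτ' hq
      by_cases hcc : zIsC mm dd θbar.2 τ ∧ zIsC mm dd θbar.2 τ'
      · obtain ⟨i, hi, hei⟩ := hcc.1
        obtain ⟨j, hj, hej⟩ := hcc.2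
        subst hei
        subst hej
        exact ⟨zBR_const _ _ _, zBR_const _ _ _⟩
      · rw [hBB_nc c.bN τ τ' hcc, hBB_nc c.bN τ' τ (fun h => hcc ⟨h.2, h.1⟩)]
        obtain ⟨-, hpS, hpl⟩ := hlev_all τ hτ
        obtain ⟨-, hpS', hpl'⟩ := hlev_all τ' hτ'
        have hq' : M.q (zProj c.dist.w.support mm sh dd θbar τ).2
            (zProj c.dist.w.support mm sh dd θbar τ').2
            + M.q (zProj c.dist.w.support mm sh dd θbar τ').2
              (zProj c.dist.w.support mm sh dd θbar τ).2 < 1 := by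
          rw [hpl, hpl']
          exact hq
        have hne := c.bN_mem _ hpS _ hpS' hq'
        exact ⟨hBR_tr τ hτ _ _ hne.1, hBR_tr τ' hτ' _ _ hne.2⟩
    have hbD : ∀ τ ∈ ctw.support, ∀ τ' ∈ ctw.support, τ'.2 < τ.2 →
        (zBB c.dist.w.support mm sh dd θbar a₀ phat.1 phat.2 c.bD τ τ',
          zBB c.dist.w.support mm sh dd θbar a₀ phat.1 phat.2 c.bD τ' τ) ∈ DE τ.1 τ'.1 := by
      intro τ hτ τ' hτ' hlt
      obtain ⟨hle2, hpS, hpl⟩ := hlev_all τ hτ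
      obtain ⟨hle2', hpS', hpl'⟩ := hlev_all τ' hτ'
      have hnc' : ¬ zIsC mm dd θbar.2 τ' := by
        rintro ⟨i, hi, rfl⟩
        exact absurd (lt_of_lt_of_le hlt hle2) (lt_irrefl θbar.2)
      have hcc : ¬(zIsC mm dd θbar.2 τ ∧ zIsC mm dd θbar.2 τ') := fun h => hnc' h.2
      rw [hBB_nc c.bD τ τ' hcc, hBB_nc c.bD τ' τ (fun h => hcc ⟨h.2, h.1⟩)]
      have hlt' : (zProj c.dist.w.support mm sh dd θbar τ').2
          < (zProj c.dist.w.support mm sh dd θbar τ).2 := by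
        rw [hpl, hpl']
        exact hlt
      have hde := c.bD_mem _ hpS _ hpS' hlt'
      have hde2 : (c.bD (zProj c.dist.w.support mm sh dd θbar τ)
            (zProj c.dist.w.support mm sh dd θbar τ'),
          c.bD (zProj c.dist.w.support mm sh dd θbar τ')
            (zProj c.dist.w.support mm sh dd θbar τ))
          ∈ DE (zProj c.dist.w.support mm sh dd θbar τ).1 τ'.1 := by
        rw [zDE_undom _ _ _ (hUnd_tr τ' hτ' hnc')]
        exact hde
      exact hDE_tr τ hτ _ _ hde2
    set ct : Config M := ⟨⟨ctw, hctw_nonneg, hctw_total⟩,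
      zBB c.dist.w.support mm sh dd θbar a₀ phat.1 phat.2 c.bN,
      zBB c.dist.w.support mm sh dd θbar a₀ phat.1 phat.2 c.bD, hbN, hbD⟩ with hct
    have hfocal : Focal c ct := by
      constructor
      · intro θ hθ
        show θ ∈ ctw.support
        exact Finsupp.mem_support_iff.2 (ne_of_gt (hposS θ hθ))
      · intro θ hθ θ' hθ'
        exact ⟨hBB_SS c.bN θ hθ θ' hθ', hBB_SS c.bD θ hθ θ' hθ'⟩
    have hNSSon := hstab (εb / 2) hε ct hfocal rfl
    have hνsub : ν.w.support ⊆ ct.supp := by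
      intro τ hτ
      show τ ∈ ctw.support
      exact Finsupp.mem_support_iff.2 (ne_of_gt (hposν τ hτ))
    obtain ⟨εb', hεb', hineq⟩ := hNSSon ν hνsub
    have hε' : εb' / 2 ∈ Set.Ioo (0 : ℝ) εb' := ⟨by linarith [hεb'.1], by linarith [hεb'.1]⟩
    have hIQ := hineq (εb' / 2) hε'
    have hε'pos : (0 : ℝ) < εb' / 2 := hε'.1
    rw [zplayT_combR, zplayT_combR] at hIQ
    -- payoff evaluation lemmas
    have hctbN : ct.bN = zBB c.dist.w.support mm sh dd θbar a₀ phat.1 phat.2 c.bN := rfl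
    have hctbD : ct.bD = zBB c.dist.w.support mm sh dd θbar a₀ phat.1 phat.2 c.bD := rfl
    have htp_eq : ∀ (p q p' q' : GType A), p.2 = p'.2 → q.2 = q'.2 →
        ct.bN p q = c.bN p' q' → ct.bN q p = c.bN q' p' →
        ct.bD p q = c.bD p' q' → ct.bD q p = c.bD q' p' →
        typePay ct p q = typePay c p' q' := by
      intro p q p' q' hp2 hq2 h1 h2 h3 h4
      unfold typePay condFit
      rw [h1, h2, h3, h4, hp2, hq2]
    have hBB_ClS : ∀ (base : GType A → GType A → Mixed A),
        ∀ θ ∈ c.dist.w.support, ∀ x ∈ c.dist.w.support,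
        zBB c.dist.w.support mm sh dd θbar a₀ phat.1 phat.2 base (zClone sh θ) x
          = base θ x := by
      intro base θ hθ x hx
      rw [hBB_nc base _ _ (fun h => hClnotC θ hθ h.1), hprojC θ hθ, hprojS x hx]
    have hBB_SCl : ∀ (base : GType A → GType A → Mixed A),
        ∀ x ∈ c.dist.w.support, ∀ θ ∈ c.dist.w.support,
        zBB c.dist.w.support mm sh dd θbar a₀ phat.1 phat.2 base x (zClone sh θ)
          = base x θ := by
      intro base x hx θ hθ
      rw [hBB_nc base _ _ (fun h => hSnotC x hx h.1), hprojC θ hθ, hprojS x hx]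
    have hBB_ClCl : ∀ (base : GType A → GType A → Mixed A),
        ∀ θ ∈ c.dist.w.support, ∀ θ' ∈ c.dist.w.support,
        zBB c.dist.w.support mm sh dd θbar a₀ phat.1 phat.2 base (zClone sh θ) (zClone sh θ')
          = base θ θ' := by
      intro base θ hθ θ' hθ'
      rw [hBB_nc base _ _ (fun h => hClnotC θ hθ h.1), hprojC θ hθ, hprojC θ' hθ']
    have hBB_GS : ∀ (base : GType A → GType A → Mixed A), ∀ i, i < mm →
        ∀ x ∈ c.dist.w.support,
        zBB c.dist.w.support mm sh dd θbar a₀ phat.1 phat.2 base (zG dd θbar.2 i) x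
          = base θbar x := by
      intro base i hi x hx
      rw [hBB_nc base _ _ (fun h => hSnotC x hx h.2), hprojG i hi, hprojS x hx]
    have hBB_SG : ∀ (base : GType A → GType A → Mixed A), ∀ x ∈ c.dist.w.support,
        ∀ i, i < mm →
        zBB c.dist.w.support mm sh dd θbar a₀ phat.1 phat.2 base x (zG dd θbar.2 i)
          = base x θbar := by
      intro base x hx i hi
      rw [hBB_nc base _ _ (fun h => hSnotC x hx h.1), hprojG i hi, hprojS x hx]
    have hBB_GCl : ∀ (base : GType A → GType A → Mixed A), ∀ i, i < mm →
        ∀ θ ∈ c.dist.w.support,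
        zBB c.dist.w.support mm sh dd θbar a₀ phat.1 phat.2 base
          (zG dd θbar.2 i) (zClone sh θ) = base θbar θ := by
      intro base i hi θ hθ
      rw [hBB_nc base _ _ (fun h => hClnotC θ hθ h.2), hprojG i hi, hprojC θ hθ]
    have hBB_ClG : ∀ (base : GType A → GType A → Mixed A), ∀ θ ∈ c.dist.w.support,
        ∀ i, i < mm →
        zBB c.dist.w.support mm sh dd θbar a₀ phat.1 phat.2 base
          (zClone sh θ) (zG dd θbar.2 i) = base θ θbar := by
      intro base θ hθ i hi
      rw [hBB_nc base _ _ (fun h => hClnotC θ hθ h.1), hprojG i hi, hprojC θ hθ]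
    -- typePay evaluations
    have hF_SS : ∀ θ ∈ c.dist.w.support, ∀ q ∈ c.dist.w.support,
        typePay ct θ q = typePay c θ q := fun θ hθ q hq =>
      htp_eq θ q θ q rfl rfl (hBB_SS c.bN θ hθ q hq) (hBB_SS c.bN q hq θ hθ)
        (hBB_SS c.bD θ hθ q hq) (hBB_SS c.bD q hq θ hθ)
    have hF_ClS : ∀ θ ∈ c.dist.w.support, ∀ q ∈ c.dist.w.support,
        typePay ct (zClone sh θ) q = typePay c θ q := fun θ hθ q hq =>
      htp_eq (zClone sh θ) q θ q rfl rfl (hBB_ClS c.bN θ hθ q hq) (hBB_SCl c.bN q hq θ hθ)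
        (hBB_ClS c.bD θ hθ q hq) (hBB_SCl c.bD q hq θ hθ)
    have hF_SCl : ∀ q ∈ c.dist.w.support, ∀ θ ∈ c.dist.w.support,
        typePay ct q (zClone sh θ) = typePay c q θ := fun q hq θ hθ =>
      htp_eq q (zClone sh θ) q θ rfl rfl (hBB_SCl c.bN q hq θ hθ) (hBB_ClS c.bN θ hθ q hq)
        (hBB_SCl c.bD q hq θ hθ) (hBB_ClS c.bD θ hθ q hq)
    have hF_ClCl : ∀ θ ∈ c.dist.w.support, ∀ θ' ∈ c.dist.w.support,
        typePay ct (zClone sh θ) (zClone sh θ') = typePay c θ θ' := fun θ hθ θ' hθ' =>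
      htp_eq (zClone sh θ) (zClone sh θ') θ θ' rfl rfl (hBB_ClCl c.bN θ hθ θ' hθ')
        (hBB_ClCl c.bN θ' hθ' θ hθ) (hBB_ClCl c.bD θ hθ θ' hθ') (hBB_ClCl c.bD θ' hθ' θ hθ)
    have hF_GS : ∀ i, i < mm → ∀ q ∈ c.dist.w.support,
        typePay ct (zG dd θbar.2 i) q = typePay c θbar q := fun i hi q hq =>
      htp_eq (zG dd θbar.2 i) q θbar q rfl rfl (hBB_GS c.bN i hi q hq) (hBB_SG c.bN q hq i hi)
        (hBB_GS c.bD i hi q hq) (hBB_SG c.bD q hq i hi)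
    have hF_SG : ∀ q ∈ c.dist.w.support, ∀ i, i < mm →
        typePay ct q (zG dd θbar.2 i) = typePay c q θbar := fun q hq i hi =>
      htp_eq q (zG dd θbar.2 i) q θbar rfl rfl (hBB_SG c.bN q hq i hi) (hBB_GS c.bN i hi q hq)
        (hBB_SG c.bD q hq i hi) (hBB_GS c.bD i hi q hq)
    have hF_GCl : ∀ i, i < mm → ∀ θ ∈ c.dist.w.support,
        typePay ct (zG dd θbar.2 i) (zClone sh θ) = typePay c θbar θ := fun i hi θ hθ =>
      htp_eq (zG dd θbar.2 i) (zClone sh θ) θbar θ rfl rfl (hBB_GCl c.bN i hi θ hθ)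
        (hBB_ClG c.bN θ hθ i hi) (hBB_GCl c.bD i hi θ hθ) (hBB_ClG c.bD θ hθ i hi)
    have hF_ClG : ∀ θ ∈ c.dist.w.support, ∀ i, i < mm →
        typePay ct (zClone sh θ) (zG dd θbar.2 i) = typePay c θ θbar := fun θ hθ i hi =>
      htp_eq (zClone sh θ) (zG dd θbar.2 i) θ θbar rfl rfl (hBB_ClG c.bN θ hθ i hi)
        (hBB_GCl c.bN i hi θ hθ) (hBB_ClG c.bD θ hθ i hi) (hBB_GCl c.bD i hi θ hθ)
    have hF_GG : ∀ i, i < mm → ∀ j, j < mm →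
        typePay ct (zG dd θbar.2 i) (zG dd θbar.2 j)
          = exPay M.π (ct.bN (zG dd θbar.2 i) (zG dd θbar.2 j))
              (ct.bN (zG dd θbar.2 j) (zG dd θbar.2 i)) - M.k θbar.2 := by
      intro i hi j hj
      unfold typePay condFit
      show (M.q θbar.2 θbar.2 + M.q θbar.2 θbar.2) * _
          + (1 - M.q θbar.2 θbar.2 - M.q θbar.2 θbar.2) * _ - M.k θbar.2 = _
      rw [zq_self M θbar.2]
      ring
    -- block decompositions
    have hsplit : ∀ f : GType A → ℝ, (∑ θ ∈ c.dist.w.support.erase θbar, f θ) + f θbar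
        = ∑ θ ∈ c.dist.w.support, f θ := fun f => Finset.sum_erase_add _ _ hmem'
    have hquad : ∀ g : GType A → GType A → ℝ,
        ∑ θ ∈ c.dist.w.support, ∑ q ∈ c.dist.w.support, g θ q
        = (∑ θ ∈ c.dist.w.support.erase θbar, ∑ q ∈ c.dist.w.support.erase θbar, g θ q)
          + (∑ θ ∈ c.dist.w.support.erase θbar, g θ θbar)
          + ((∑ q ∈ c.dist.w.support.erase θbar, g θbar q) + g θbar θbar) := by
      intro g
      rw [← hsplit (fun θ => ∑ q ∈ c.dist.w.support, g θ q),
        ← hsplit (fun q => g θbar q),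
        Finset.sum_congr rfl (fun θ _ => (hsplit (fun q => g θ q)).symm),
        Finset.sum_add_distrib]
    -- the four playT identities
    have hO : playT (typePay ct) c.dist.w c.dist.w
        = (∑ θ ∈ c.dist.w.support.erase θbar, ∑ q ∈ c.dist.w.support.erase θbar,
            c.dist.w θ * c.dist.w q * typePay c θ q)
          + (∑ θ ∈ c.dist.w.support.erase θbar,
              c.dist.w θ * c.dist.w θbar * typePay c θ θbar)
          + ((∑ q ∈ c.dist.w.support.erase θbar,
              c.dist.w θbar * c.dist.w q * typePay c θbar q)
            + c.dist.w θbar * c.dist.w θbar * typePay c θbar θbar) := by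
      have h1 : playT (typePay ct) c.dist.w c.dist.w
          = ∑ θ ∈ c.dist.w.support, ∑ q ∈ c.dist.w.support,
              c.dist.w θ * c.dist.w q * typePay c θ q := by
        unfold playT
        exact Finset.sum_congr rfl fun θ hθ => Finset.sum_congr rfl fun q hq => by
          rw [hF_SS θ hθ q hq]
      rw [h1, hquad (fun θ q => c.dist.w θ * c.dist.w q * typePay c θ q)]
    have hA : playT (typePay ct) (w1 + w2) c.dist.w
        = (∑ θ ∈ c.dist.w.support.erase θbar, ∑ q ∈ c.dist.w.support.erase θbar,
            c.dist.w θ * c.dist.w q * typePay c θ q)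
          + (∑ θ ∈ c.dist.w.support.erase θbar,
              c.dist.w θ * c.dist.w θbar * typePay c θ θbar)
          + ((∑ q ∈ c.dist.w.support.erase θbar,
              c.dist.w θbar * c.dist.w q * typePay c θbar q)
            + c.dist.w θbar * c.dist.w θbar * typePay c θbar θbar) := by
      rw [zplayT_addL, hw1, hw2, zplayT_sumL, zplayT_sumL]
      have e1 : ∀ θ ∈ c.dist.w.support.erase θbar,
          playT (typePay ct) (Finsupp.single (zClone sh θ) (c.dist.w θ)) c.dist.w
            = c.dist.w θ * ∑ q ∈ c.dist.w.support, c.dist.w q * typePay c θ q := by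
        intro θ hθ
        rw [zplayT_singleL]
        congr 1
        refine Finset.sum_congr rfl fun q hq => ?_
        rw [hF_ClS θ (Finset.mem_of_mem_erase hθ) q hq]
      have e2 : ∀ i ∈ Finset.range mm,
          playT (typePay ct) (Finsupp.single (zG dd θbar.2 i) (c.dist.w θbar / mm)) c.dist.w
            = (c.dist.w θbar / mm)
                * ∑ q ∈ c.dist.w.support, c.dist.w q * typePay c θbar q := by
        intro i hi
        rw [zplayT_singleL]
        congr 1
        refine Finset.sum_congr rfl fun q hq => ?_
        rw [hF_GS i (Finset.mem_range.1 hi) q hq]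
      rw [Finset.sum_congr rfl e1, Finset.sum_congr rfl e2, Finset.sum_const,
        Finset.card_range, nsmul_eq_mul]
      have e3 : (mm : ℝ) * ((c.dist.w θbar / mm)
            * ∑ q ∈ c.dist.w.support, c.dist.w q * typePay c θbar q)
          = c.dist.w θbar * ∑ q ∈ c.dist.w.support, c.dist.w q * typePay c θbar q := by
        field_simp
      rw [e3, hsplit (fun θ => c.dist.w θ
        * ∑ q ∈ c.dist.w.support, c.dist.w q * typePay c θ q)]
      have e4 : ∑ θ ∈ c.dist.w.support, c.dist.w θ
            * (∑ q ∈ c.dist.w.support, c.dist.w q * typePay c θ q)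
          = ∑ θ ∈ c.dist.w.support, ∑ q ∈ c.dist.w.support,
              c.dist.w θ * c.dist.w q * typePay c θ q := by
        refine Finset.sum_congr rfl fun θ _ => ?_
        rw [Finset.mul_sum]
        exact Finset.sum_congr rfl fun q _ => by ring
      rw [e4, hquad (fun θ q => c.dist.w θ * c.dist.w q * typePay c θ q)]
    have hB : playT (typePay ct) c.dist.w (w1 + w2)
        = (∑ θ ∈ c.dist.w.support.erase θbar, ∑ q ∈ c.dist.w.support.erase θbar,
            c.dist.w θ * c.dist.w q * typePay c θ q)
          + (∑ θ ∈ c.dist.w.support.erase θbar,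
              c.dist.w θ * c.dist.w θbar * typePay c θ θbar)
          + ((∑ q ∈ c.dist.w.support.erase θbar,
              c.dist.w θbar * c.dist.w q * typePay c θbar q)
            + c.dist.w θbar * c.dist.w θbar * typePay c θbar θbar) := by
      rw [zplayT_addR, hw1, hw2, zplayT_sumR, zplayT_sumR]
      have e1 : ∀ θ ∈ c.dist.w.support.erase θbar,
          playT (typePay ct) c.dist.w (Finsupp.single (zClone sh θ) (c.dist.w θ))
            = c.dist.w θ * ∑ q ∈ c.dist.w.support, c.dist.w q * typePay c q θ := by
        intro θ hθ
        rw [zplayT_singleR]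
        congr 1
        refine Finset.sum_congr rfl fun q hq => ?_
        rw [hF_SCl q hq θ (Finset.mem_of_mem_erase hθ)]
      have e2 : ∀ i ∈ Finset.range mm,
          playT (typePay ct) c.dist.w (Finsupp.single (zG dd θbar.2 i) (c.dist.w θbar / mm))
            = (c.dist.w θbar / mm)
                * ∑ q ∈ c.dist.w.support, c.dist.w q * typePay c q θbar := by
        intro i hi
        rw [zplayT_singleR]
        congr 1
        refine Finset.sum_congr rfl fun q hq => ?_
        rw [hF_SG q hq i (Finset.mem_range.1 hi)]
      rw [Finset.sum_congr rfl e1, Finset.sum_congr rfl e2, Finset.sum_const,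
        Finset.card_range, nsmul_eq_mul]
      have e3 : (mm : ℝ) * ((c.dist.w θbar / mm)
            * ∑ q ∈ c.dist.w.support, c.dist.w q * typePay c q θbar)
          = c.dist.w θbar * ∑ q ∈ c.dist.w.support, c.dist.w q * typePay c q θbar := by
        field_simp
      rw [e3, hsplit (fun θ => c.dist.w θ
        * ∑ q ∈ c.dist.w.support, c.dist.w q * typePay c q θ)]
      have e4 : ∑ θ ∈ c.dist.w.support, c.dist.w θ
            * (∑ q ∈ c.dist.w.support, c.dist.w q * typePay c q θ)
          = ∑ θ ∈ c.dist.w.support, ∑ q ∈ c.dist.w.support,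
              c.dist.w θ * c.dist.w q * typePay c q θ := by
        refine Finset.sum_congr rfl fun θ _ => ?_
        rw [Finset.mul_sum]
        exact Finset.sum_congr rfl fun q _ => by ring
      rw [e4, hquad (fun θ q => c.dist.w θ * c.dist.w q * typePay c q θ)]
      -- transpose the blocks
      have t1 : ∑ θ ∈ c.dist.w.support.erase θbar, ∑ q ∈ c.dist.w.support.erase θbar,
            c.dist.w θ * c.dist.w q * typePay c q θ
          = ∑ θ ∈ c.dist.w.support.erase θbar, ∑ q ∈ c.dist.w.support.erase θbar,
            c.dist.w θ * c.dist.w q * typePay c θ q := by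
        rw [Finset.sum_comm]
        exact Finset.sum_congr rfl fun q _ => Finset.sum_congr rfl fun θ _ => by ring
      have t2 : ∑ θ ∈ c.dist.w.support.erase θbar,
            c.dist.w θ * c.dist.w θbar * typePay c θbar θ
          = ∑ q ∈ c.dist.w.support.erase θbar,
            c.dist.w θbar * c.dist.w q * typePay c θbar q :=
        Finset.sum_congr rfl fun θ _ => by ring
      have t3 : ∑ q ∈ c.dist.w.support.erase θbar,
            c.dist.w θbar * c.dist.w q * typePay c q θbar
          = ∑ θ ∈ c.dist.w.support.erase θbar,
            c.dist.w θ * c.dist.w θbar * typePay c θ θbar :=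
        Finset.sum_congr rfl fun θ _ => by ring
      rw [t1, t2, t3]
      ring
    have hC : playT (typePay ct) (w1 + w2) (w1 + w2)
        = (∑ θ ∈ c.dist.w.support.erase θbar, ∑ q ∈ c.dist.w.support.erase θbar,
            c.dist.w θ * c.dist.w q * typePay c θ q)
          + (∑ θ ∈ c.dist.w.support.erase θbar,
              c.dist.w θ * c.dist.w θbar * typePay c θ θbar)
          + ((∑ q ∈ c.dist.w.support.erase θbar,
              c.dist.w θbar * c.dist.w q * typePay c θbar q)
            + ∑ i ∈ Finset.range mm, ∑ j ∈ Finset.range mm,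
                (c.dist.w θbar / mm) * (c.dist.w θbar / mm)
                  * typePay ct (zG dd θbar.2 i) (zG dd θbar.2 j)) := by
      rw [zplayT_addL, zplayT_addR, zplayT_addR]
      have e11 : playT (typePay ct) w1 w1
          = ∑ θ ∈ c.dist.w.support.erase θbar, ∑ q ∈ c.dist.w.support.erase θbar,
              c.dist.w θ * c.dist.w q * typePay c θ q := by
        rw [hw1, zplayT_sumL]
        refine Finset.sum_congr rfl fun θ hθ => ?_
        rw [zplayT_sumR]
        refine Finset.sum_congr rfl fun q hq => ?_
        rw [zplayT_single_single,
          hF_ClCl θ (Finset.mem_of_mem_erase hθ) q (Finset.mem_of_mem_erase hq)]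
      have e12 : playT (typePay ct) w1 w2
          = ∑ θ ∈ c.dist.w.support.erase θbar,
              c.dist.w θ * c.dist.w θbar * typePay c θ θbar := by
        rw [hw1, hw2, zplayT_sumL]
        refine Finset.sum_congr rfl fun θ hθ => ?_
        rw [zplayT_sumR]
        have e : ∀ i ∈ Finset.range mm,
            playT (typePay ct) (Finsupp.single (zClone sh θ) (c.dist.w θ))
              (Finsupp.single (zG dd θbar.2 i) (c.dist.w θbar / mm))
            = c.dist.w θ * (c.dist.w θbar / mm) * typePay c θ θbar := by
          intro i hi
          rw [zplayT_single_single,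
            hF_ClG θ (Finset.mem_of_mem_erase hθ) i (Finset.mem_range.1 hi)]
        rw [Finset.sum_congr rfl e, Finset.sum_const, Finset.card_range, nsmul_eq_mul]
        field_simp
      have e21 : playT (typePay ct) w2 w1
          = ∑ q ∈ c.dist.w.support.erase θbar,
              c.dist.w θbar * c.dist.w q * typePay c θbar q := by
        rw [hw1, hw2, zplayT_sumL]
        have e : ∀ i ∈ Finset.range mm,
            playT (typePay ct) (Finsupp.single (zG dd θbar.2 i) (c.dist.w θbar / mm))
              (∑ θ ∈ c.dist.w.support.erase θbar,
                Finsupp.single (zClone sh θ) (c.dist.w θ))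
            = ∑ q ∈ c.dist.w.support.erase θbar,
                (c.dist.w θbar / mm) * c.dist.w q * typePay c θbar q := by
          intro i hi
          rw [zplayT_sumR]
          refine Finset.sum_congr rfl fun q hq => ?_
          rw [zplayT_single_single,
            hF_GCl i (Finset.mem_range.1 hi) q (Finset.mem_of_mem_erase hq)]
        rw [Finset.sum_congr rfl e, Finset.sum_const, Finset.card_range, nsmul_eq_mul,
          Finset.mul_sum]
        refine Finset.sum_congr rfl fun q _ => ?_
        field_simp
      have e22 : playT (typePay ct) w2 w2
          = ∑ i ∈ Finset.range mm, ∑ j ∈ Finset.range mm,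
              (c.dist.w θbar / mm) * (c.dist.w θbar / mm)
                * typePay ct (zG dd θbar.2 i) (zG dd θbar.2 j) := by
        rw [hw2, zplayT_sumL]
        refine Finset.sum_congr rfl fun i hi => ?_
        rw [zplayT_sumR]
        exact Finset.sum_congr rfl fun j hj => zplayT_single_single _ _ _ _ _
      rw [e11, e12, e21, e22]
    -- extract the core inequality from NSS
    have hνw : ν.w = w1 + w2 := rfl
    rw [hνw, hO, hA, hB, hC] at hIQ
    set TT := ∑ i ∈ Finset.range mm, ∑ j ∈ Finset.range mm,
      exPay M.π (ct.bN (zG dd θbar.2 i) (zG dd θbar.2 j))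
        (ct.bN (zG dd θbar.2 j) (zG dd θbar.2 i)) with hTTdef
    have hcore : ∑ i ∈ Finset.range mm, ∑ j ∈ Finset.range mm,
        (c.dist.w θbar / mm) * (c.dist.w θbar / mm)
          * typePay ct (zG dd θbar.2 i) (zG dd θbar.2 j)
        ≤ c.dist.w θbar * c.dist.w θbar * typePay c θbar θbar := by
      have h1 : (εb' / 2) * ((∑ θ ∈ c.dist.w.support.erase θbar,
            ∑ q ∈ c.dist.w.support.erase θbar,
            c.dist.w θ * c.dist.w q * typePay c θ q)
          + (∑ θ ∈ c.dist.w.support.erase θbar,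
              c.dist.w θ * c.dist.w θbar * typePay c θ θbar)
          + ((∑ q ∈ c.dist.w.support.erase θbar,
              c.dist.w θbar * c.dist.w q * typePay c θbar q)
            + ∑ i ∈ Finset.range mm, ∑ j ∈ Finset.range mm,
                (c.dist.w θbar / mm) * (c.dist.w θbar / mm)
                  * typePay ct (zG dd θbar.2 i) (zG dd θbar.2 j)))
          ≤ (εb' / 2) * ((∑ θ ∈ c.dist.w.support.erase θbar,
            ∑ q ∈ c.dist.w.support.erase θbar,
            c.dist.w θ * c.dist.w q * typePay c θ q)
          + (∑ θ ∈ c.dist.w.support.erase θbar,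
              c.dist.w θ * c.dist.w θbar * typePay c θ θbar)
          + ((∑ q ∈ c.dist.w.support.erase θbar,
              c.dist.w θbar * c.dist.w q * typePay c θbar q)
            + c.dist.w θbar * c.dist.w θbar * typePay c θbar θbar)) := by
        linarith [hIQ]
      have h2 := le_of_mul_le_mul_left h1 hε'pos
      linarith [h2]
    have hTGGval : ∑ i ∈ Finset.range mm, ∑ j ∈ Finset.range mm,
        (c.dist.w θbar / mm) * (c.dist.w θbar / mm)
          * typePay ct (zG dd θbar.2 i) (zG dd θbar.2 j)
        = (c.dist.w θbar / mm) ^ 2 * TT - c.dist.w θbar ^ 2 * M.k θbar.2 := by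
      have e5 : ∀ i ∈ Finset.range mm, ∀ j ∈ Finset.range mm,
          (c.dist.w θbar / mm) * (c.dist.w θbar / mm)
            * typePay ct (zG dd θbar.2 i) (zG dd θbar.2 j)
          = (c.dist.w θbar / mm) ^ 2
              * exPay M.π (ct.bN (zG dd θbar.2 i) (zG dd θbar.2 j))
                  (ct.bN (zG dd θbar.2 j) (zG dd θbar.2 i))
            - (c.dist.w θbar / mm) ^ 2 * M.k θbar.2 := by
        intro i hi j hj
        rw [hF_GG i (Finset.mem_range.1 hi) j (Finset.mem_range.1 hj)]
        ring
      rw [Finset.sum_congr rfl (fun i hi => Finset.sum_congr rfl (fun j hj => e5 i hi j hj))]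
      rw [Finset.sum_congr rfl (fun i _ => Finset.sum_sub_distrib _ _), Finset.sum_sub_distrib _ _]
      have e6 : ∑ i ∈ Finset.range mm, ∑ j ∈ Finset.range mm,
          (c.dist.w θbar / mm) ^ 2
            * exPay M.π (ct.bN (zG dd θbar.2 i) (zG dd θbar.2 j))
                (ct.bN (zG dd θbar.2 j) (zG dd θbar.2 i))
          = (c.dist.w θbar / mm) ^ 2 * TT := by
        rw [hTTdef, Finset.mul_sum]
        refine Finset.sum_congr rfl fun i _ => ?_
        rw [Finset.mul_sum]
      have e7 : ∑ i ∈ Finset.range mm, ∑ j ∈ Finset.range mm,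
          (c.dist.w θbar / mm) ^ 2 * M.k θbar.2
          = c.dist.w θbar ^ 2 * M.k θbar.2 := by
        rw [Finset.sum_const, Finset.sum_const, Finset.card_range, nsmul_eq_mul,
          nsmul_eq_mul, ← mul_assoc]
        field_simp
      rw [e6, e7]
    have hcf : typePay c θbar θbar
        = exPay M.π (c.bN θbar θbar) (c.bN θbar θbar) - M.k θbar.2 := by
      unfold typePay condFit
      rw [zq_self M θbar.2]
      ring
    have hcore2 : (c.dist.w θbar / mm) ^ 2 * TT
        ≤ c.dist.w θbar ^ 2 * exPay M.π (c.bN θbar θbar) (c.bN θbar θbar) := by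
      rw [hTGGval, hcf] at hcore
      have e9 : c.dist.w θbar * c.dist.w θbar
            * (exPay M.π (c.bN θbar θbar) (c.bN θbar θbar) - M.k θbar.2)
          = c.dist.w θbar ^ 2 * exPay M.π (c.bN θbar θbar) (c.bN θbar θbar)
            - c.dist.w θbar ^ 2 * M.k θbar.2 := by ring
      rw [e9] at hcore
      linarith [hcore]
    have hTTle : TT ≤ (mm : ℝ) ^ 2 * exPay M.π (c.bN θbar θbar) (c.bN θbar θbar) := by
      have h6 : (c.dist.w θbar / mm) ^ 2 * TT * (mm : ℝ) ^ 2 = c.dist.w θbar ^ 2 * TT := by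
        field_simp
      have h7 := mul_le_mul_of_nonneg_right hcore2 (sq_nonneg (mm : ℝ))
      rw [h6] at h7
      have e10 : c.dist.w θbar ^ 2 * exPay M.π (c.bN θbar θbar) (c.bN θbar θbar)
            * (mm : ℝ) ^ 2
          = c.dist.w θbar ^ 2
            * ((mm : ℝ) ^ 2 * exPay M.π (c.bN θbar θbar) (c.bN θbar θbar)) := by ring
      rw [e10] at h7
      exact le_of_mul_le_mul_left h7 (pow_pos hμpos 2)
    -- compute TT
    have hfsum : ∀ i ∈ Finset.range mm, ∀ j ∈ Finset.range mm,
        exPay M.π (ct.bN (zG dd θbar.2 i) (zG dd θbar.2 j))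
            (ct.bN (zG dd θbar.2 j) (zG dd θbar.2 i))
          + exPay M.π (ct.bN (zG dd θbar.2 j) (zG dd θbar.2 i))
              (ct.bN (zG dd θbar.2 i) (zG dd θbar.2 j))
        = if i = j then 2 * M.π phat.2 phat.2
          else M.π phat.1 phat.2 + M.π phat.2 phat.1 := by
      intro i hi j hj
      have hi' := Finset.mem_range.1 hi
      have hj' := Finset.mem_range.1 hj
      rcases lt_trichotomy i j with h | h | h
      · rw [if_neg (ne_of_lt h), hctbN, hBB_GG c.bN i hi' j hj', hBB_GG c.bN j hj' i hi',
          if_pos h, if_neg (lt_asymm h), zexPay_pure, zexPay_pure]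
      · subst h
        rw [if_pos rfl, hctbN, hBB_GG c.bN i hi' i hi', if_neg (lt_irrefl i), zexPay_pure]
        ring
      · rw [if_neg (Ne.symm (ne_of_lt h)), hctbN, hBB_GG c.bN i hi' j hj',
          hBB_GG c.bN j hj' i hi', if_neg (lt_asymm h), if_pos h, zexPay_pure, zexPay_pure]
        ring
    have h2TT : 2 * TT
        = (mm : ℝ) * ((mm : ℝ) * (M.π phat.1 phat.2 + M.π phat.2 phat.1)
            + (2 * M.π phat.2 phat.2 - (M.π phat.1 phat.2 + M.π phat.2 phat.1))) := by
      have hswap : TT = ∑ i ∈ Finset.range mm, ∑ j ∈ Finset.range mm,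
          exPay M.π (ct.bN (zG dd θbar.2 j) (zG dd θbar.2 i))
            (ct.bN (zG dd θbar.2 i) (zG dd θbar.2 j)) := by
        rw [hTTdef, Finset.sum_comm]
      have step1 : 2 * TT = ∑ i ∈ Finset.range mm, ∑ j ∈ Finset.range mm,
          (exPay M.π (ct.bN (zG dd θbar.2 i) (zG dd θbar.2 j))
              (ct.bN (zG dd θbar.2 j) (zG dd θbar.2 i))
            + exPay M.π (ct.bN (zG dd θbar.2 j) (zG dd θbar.2 i))
                (ct.bN (zG dd θbar.2 i) (zG dd θbar.2 j))) := by
        rw [two_mul]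
        nth_rewrite 2 [hswap]
        rw [hTTdef, ← Finset.sum_add_distrib]
        exact Finset.sum_congr rfl fun i _ => (Finset.sum_add_distrib).symm
      rw [step1, Finset.sum_congr rfl (fun i hi => Finset.sum_congr rfl
        (fun j hj => hfsum i hi j hj))]
      have step2 : ∀ i ∈ Finset.range mm,
          ∑ j ∈ Finset.range mm, (if i = j then 2 * M.π phat.2 phat.2
              else M.π phat.1 phat.2 + M.π phat.2 phat.1)
          = (mm : ℝ) * (M.π phat.1 phat.2 + M.π phat.2 phat.1)
            + (2 * M.π phat.2 phat.2 - (M.π phat.1 phat.2 + M.π phat.2 phat.1)) := by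
        intro i hi
        have e8 : ∀ j, (if i = j then 2 * M.π phat.2 phat.2
              else M.π phat.1 phat.2 + M.π phat.2 phat.1)
            = (M.π phat.1 phat.2 + M.π phat.2 phat.1)
              + (if i = j then 2 * M.π phat.2 phat.2
                  - (M.π phat.1 phat.2 + M.π phat.2 phat.1) else 0) := by
          intro j
          split_ifs <;> ring
        rw [Finset.sum_congr rfl fun j _ => e8 j, Finset.sum_add_distrib,
          Finset.sum_const, Finset.card_range, nsmul_eq_mul, Finset.sum_ite_eq,
          if_pos hi]
      rw [Finset.sum_congr rfl step2, Finset.sum_const, Finset.card_range, nsmul_eq_mul]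
    -- conclude
    have hfin0 : (mm : ℝ) * ((mm : ℝ)
          * (effPay M - exPay M.π (c.bN θbar θbar) (c.bN θbar θbar)))
        ≤ (mm : ℝ) * (effPay M - M.π phat.2 phat.2) := by
      rw [hS2] at h2TT
      ring_nf at h2TT hTTle ⊢
      linarith [h2TT, hTTle]
    exact le_of_mul_le_mul_left hfin0 hmmR
  refine le_antisymm hle ?_
  by_contra hcon
  push_neg at hcon
  have hδ : 0 < effPay M - exPay M.π (c.bN θbar θbar) (c.bN θbar θbar) := by linarith
  obtain ⟨n, hn⟩ := exists_nat_gt ((effPay M - M.π phat.2 phat.2)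
    / (effPay M - exPay M.π (c.bN θbar θbar) (c.bN θbar θbar)))
  have hk := key (n + 1) (Nat.succ_pos n)
  push_cast at hk
  have h1 : (effPay M - M.π phat.2 phat.2)
      / (effPay M - exPay M.π (c.bN θbar θbar) (c.bN θbar θbar)) < (n : ℝ) + 1 := by
    linarith
  have h2 : effPay M - M.π phat.2 phat.2
      < ((n : ℝ) + 1) * (effPay M - exPay M.π (c.bN θbar θbar) (c.bN θbar θbar)) :=
    (div_lt_iff₀ hδ).1 h1
  linarith
end
end

section
/- In any neutrally stable configuration (μ*,b*), every incumbent type with the highest cognitive level plays a fitness-maximising deception equilibrium against every incumbent of strictly lower cognitive level: if θ̲,θ̄∈C(μ*) with n_{θ̲}<n_{θ̄}=max{n_θ : θ∈C(μ*)}, then (b^D_{θ̄}(θ̲), b^D_{θ̲}(θ̄)) ∈ FMDE(θ̄,θ̲); in particular FMDE(θ̄,θ̲) is nonempty. -/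
open scoped Classical
set_option maxHeartbeats 1000000

noncomputable section

variable {A : Type} [Fintype A]

/-! ### Auxiliary lemmas for Statement 1 -/

theorem exPay_const (t : ℝ) (σ σ' : Mixed A) : exPay (fun _ _ => t) σ σ' = t := by
  have key : ∀ a : A, (∑ a', σ.1 a * σ'.1 a' * t) = σ.1 a * t := by
    intro a
    rw [← Finset.sum_mul, ← Finset.mul_sum, σ'.2.2, mul_one]
  show (∑ a, ∑ a', σ.1 a * σ'.1 a' * t) = t
  rw [Finset.sum_congr rfl fun a _ => key a, ← Finset.sum_mul, σ.2.2, one_mul]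

theorem mem_BR_const (t : ℝ) (σ τ : Mixed A) : σ ∈ BR (fun _ _ => t) τ :=
  fun ρ => le_of_eq ((exPay_const t ρ τ).trans (exPay_const t σ τ).symm)

theorem mem_DE_const (t : ℝ) (u' : A → A → ℝ) (σ σ' : Mixed A) (h : σ' ∈ Undom u') :
    (σ, σ') ∈ DE (fun _ _ => t) u' :=
  ⟨h, fun τ τ' _ => le_of_eq ((exPay_const t τ τ').trans (exPay_const t σ σ').symm)⟩

theorem le_of_forall_eps {X Y a b e0 : ℝ} (he : 0 < e0)
    (h : ∀ ε : ℝ, 0 < ε → ε < e0 → (1 - ε) * X + ε * a ≤ (1 - ε) * Y + ε * b) :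
    X ≤ Y := by
  by_contra hc
  push_neg at hc
  have hd0 : 0 < X - Y := sub_pos.mpr hc
  have hM0 : 0 < |b - a| + 2 * (X - Y) := by positivity
  set ε : ℝ := min (e0 / 2) ((X - Y) / (|b - a| + 2 * (X - Y))) with hε
  have hε0 : 0 < ε := lt_min (by linarith) (div_pos hd0 hM0)
  have hεe : ε < e0 := lt_of_le_of_lt (min_le_left _ _) (by linarith)
  have h1 := h ε hε0 hεe
  have h2 : ε * (b - a) ≤ ε * |b - a| := mul_le_mul_of_nonneg_left (le_abs_self _) hε0.le
  have h3 : ε * (|b - a| + 2 * (X - Y)) ≤ X - Y := by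
    rw [← le_div_iff₀ hM0]
    exact min_le_right _ _
  nlinarith [mul_pos hε0 hd0]

/-- The point mass on a type. -/
def deltaDist (θ : GType A) : TypeDist A where
  w := Finsupp.single θ 1
  nonneg := fun θ' => by
    rw [Finsupp.single_apply]
    split <;> norm_num
  total := by
    rw [Finsupp.support_single_ne_zero _ one_ne_zero, Finset.sum_singleton,
      Finsupp.single_eq_same]

@[simp] theorem deltaDist_w (θ : GType A) : (deltaDist θ).w = Finsupp.single θ 1 := rfl

theorem playT_eq_sum (F : GType A → GType A → ℝ) (x y : GType A →₀ ℝ)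
    (S : Finset (GType A)) (hx : x.support ⊆ S) (hy : y.support ⊆ S) :
    playT F x y = ∑ θ ∈ S, ∑ θ' ∈ S, x θ * y θ' * F θ θ' := by
  rw [playT]
  rw [Finset.sum_subset hx (fun θ _ hθ => Finset.sum_eq_zero fun θ' _ => by
    rw [Finsupp.notMem_support_iff.mp hθ, zero_mul, zero_mul])]
  refine Finset.sum_congr rfl fun θ _ => Finset.sum_subset hy fun θ' _ hθ' => by
    rw [Finsupp.notMem_support_iff.mp hθ', mul_zero, zero_mul]

theorem playT_left_single (F : GType A → GType A → ℝ) (θ0 : GType A) (y : GType A →₀ ℝ)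
    (U : Finset (GType A)) (hθ0 : θ0 ∈ U) (hy : y.support ⊆ U) :
    playT F (Finsupp.single θ0 1) y = ∑ θ' ∈ U, y θ' * F θ0 θ' := by
  rw [playT_eq_sum F _ y U
    (Finsupp.support_single_subset.trans (Finset.singleton_subset_iff.mpr hθ0)) hy]
  have hz : ∀ θ ∈ U, θ ≠ θ0 →
      (∑ θ' ∈ U, (Finsupp.single θ0 (1:ℝ)) θ * y θ' * F θ θ') = 0 := by
    intro θ _ hne
    refine Finset.sum_eq_zero fun θ' _ => ?_
    rw [Finsupp.single_apply, if_neg fun h => hne h.symm, zero_mul, zero_mul]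
  rw [Finset.sum_eq_single_of_mem θ0 hθ0 hz]
  refine Finset.sum_congr rfl fun θ' _ => ?_
  rw [Finsupp.single_eq_same, one_mul]

theorem sum_mix (U : Finset (GType A)) (x : GType A →₀ ℝ) (θ0 : GType A) (hθ0 : θ0 ∈ U)
    (ε2 : ℝ) (F : GType A → GType A → ℝ) (θh : GType A) :
    (∑ θ' ∈ U, ((1 - ε2) • x + ε2 • Finsupp.single θ0 (1:ℝ)) θ' * F θh θ')
      = (1 - ε2) * (∑ θ' ∈ U, x θ' * F θh θ') + ε2 * F θh θ0 := by
  have h1 : ∀ θ' ∈ U, ((1 - ε2) • x + ε2 • Finsupp.single θ0 (1:ℝ)) θ' * F θh θ'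
      = (1 - ε2) * (x θ' * F θh θ') + ε2 * (if θ0 = θ' then F θh θ' else 0) := by
    intro θ' _
    simp only [Finsupp.add_apply, Finsupp.smul_apply, smul_eq_mul, Finsupp.single_apply]
    by_cases h : θ0 = θ'
    · simp only [if_pos h]; ring
    · simp only [if_neg h]; ring
  rw [Finset.sum_congr rfl h1, Finset.sum_add_distrib, ← Finset.mul_sum, ← Finset.mul_sum,
    Finset.sum_ite_eq U θ0 (fun θ' => F θh θ'), if_pos hθ0]

theorem double_mix (U : Finset (GType A)) (g x : GType A →₀ ℝ) (θ0 : GType A) (hθ0 : θ0 ∈ U)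
    (ε2 : ℝ) (F : GType A → GType A → ℝ) :
    (∑ θ ∈ U, ∑ θ' ∈ U, g θ * (((1 - ε2) • x + ε2 • Finsupp.single θ0 (1:ℝ)) θ') * F θ θ')
    = (1 - ε2) * (∑ θ ∈ U, g θ * (∑ θ' ∈ U, x θ' * F θ θ'))
      + ε2 * (∑ θ ∈ U, g θ * F θ θ0) := by
  have key : ∀ θ ∈ U,
      (∑ θ' ∈ U, g θ * (((1 - ε2) • x + ε2 • Finsupp.single θ0 (1:ℝ)) θ') * F θ θ')
      = (1 - ε2) * (g θ * ∑ θ' ∈ U, x θ' * F θ θ') + ε2 * (g θ * F θ θ0) := by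
    intro θ _
    have h1 : ∀ θ' ∈ U, g θ * (((1 - ε2) • x + ε2 • Finsupp.single θ0 (1:ℝ)) θ') * F θ θ'
        = g θ * ((((1 - ε2) • x + ε2 • Finsupp.single θ0 (1:ℝ)) θ') * F θ θ') :=
      fun θ' _ => by ring
    rw [Finset.sum_congr rfl h1, ← Finset.mul_sum, sum_mix U x θ0 hθ0 ε2 F θ]
    ring
  rw [Finset.sum_congr rfl key, Finset.sum_add_distrib, ← Finset.mul_sum, ← Finset.mul_sum]

/-- Mutant mimicking behaviour in the Nash regime. -/
def mutBN {M : Model A} (c : Config M) (θm θbar : GType A) :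
    GType A → GType A → Mixed A :=
  fun θ θ' =>
    if θ = θm then (if θ' = θm then c.bN θbar θbar else c.bN θbar θ')
    else if θ' = θm then c.bN θ θbar else c.bN θ θ'

/-- Mutant behaviour in the deception regime. -/
def mutBD {M : Model A} (c : Config M) (θm θbar θlow : GType A) (s s' : Mixed A) :
    GType A → GType A → Mixed A :=
  fun θ θ' =>
    if θ = θm then (if θ' = θlow then s else if θ' = θm then c.bD θbar θbar else c.bD θbar θ')
    else if θ' = θm then (if θ = θlow then s' else c.bD θ θbar)
    else c.bD θ θ'

/-- In any NSC, every incumbent with the highest cognitive level plays a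
fitness-maximising deception equilibrium against every incumbent of strictly lower level. -/
theorem stmt1 [Nonempty A] (hA : 3 ≤ Fintype.card A) (M : Model A)
    (c : Config M) (hNSC : IsNSC c)
    (θlow θbar : GType A) (hlow : θlow ∈ c.supp) (hbar : θbar ∈ c.supp)
    (hmax : ∀ θ ∈ c.supp, θ.2 ≤ θbar.2) (hlt : θlow.2 < θbar.2) :
    (c.bD θbar θlow, c.bD θlow θbar) ∈ FMDE M.π θbar.1 θlow.1 := by
  classical
  have hDEmem := c.bD_mem θbar hbar θlow hlow hlt
  refine ⟨hDEmem, ?_⟩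
  by_contra hcon
  push_neg at hcon
  obtain ⟨s, s', hs'U, hgt⟩ := hcon
  -- choose a fresh constant preference
  obtain ⟨a0⟩ : Nonempty A := inferInstance
  have hfin : ({r : ℝ | (((fun _ _ => r) : A → A → ℝ), θbar.2) ∈ c.supp}).Finite := by
    have hinj : Function.Injective
        (fun r : ℝ => ((((fun _ _ => r) : A → A → ℝ), θbar.2) : GType A)) := by
      intro r1 r2 h
      exact congrArg (fun p : GType A => p.1 a0 a0) h
    exact Set.Finite.preimage hinj.injOn (c.supp : Finset (GType A)).finite_toSet
  obtain ⟨t, ht⟩ := hfin.infinite_compl.nonempty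
  set θm : GType A := (((fun _ _ => t) : A → A → ℝ), θbar.2) with hθm
  have hθm_not : θm ∉ c.supp := ht
  have hpref : θm.1 = (fun _ _ => t) := rfl
  have hlev : θm.2 = θbar.2 := rfl
  have hq0 : ∀ n n' : ℕ+, ¬ n' < n → M.q n n' = 0 := fun n n' h =>
    le_antisymm (not_lt.mp fun hp => h ((M.q_pos_iff n n').mp hp)) (M.q_nonneg n n')
  have hlowne : θlow ≠ θm := fun h => hθm_not (h ▸ hlow)
  have hbarne : θbar ≠ θm := fun h => hθm_not (h ▸ hbar)
  -- NSC against the mutant invasion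
  obtain ⟨εb1, hεb1, hKey⟩ := hNSC (deltaDist θm)
  set ε : ℝ := εb1 / 2 with hεdef
  have hε0 : 0 < ε := by have := hεb1.1; simp only [hεdef]; linarith
  have hε1 : ε < 1 := by have h1 := hεb1.1; have h2 := hεb1.2; simp only [hεdef]; linarith
  have hεmem : ε ∈ Set.Ioo (0:ℝ) εb1 := ⟨hε0, by have := hεb1.1; simp only [hεdef]; linarith⟩
  set U : Finset (GType A) := insert θm c.supp with hU
  have hθmU : θm ∈ U := Finset.mem_insert_self _ _
  have hθlowU : θlow ∈ U := Finset.mem_insert_of_mem hlow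
  have hθbarU : θbar ∈ U := Finset.mem_insert_of_mem hbar
  have hUsub : c.dist.w.support ⊆ U := Finset.subset_insert _ _
  -- the post-entry distribution
  have hw'nn : ∀ θ, 0 ≤ ((1 - ε) • c.dist.w + ε • Finsupp.single θm (1:ℝ)) θ := by
    intro θ
    simp only [Finsupp.add_apply, Finsupp.smul_apply, smul_eq_mul, Finsupp.single_apply]
    have h1 := c.dist.nonneg θ
    have h2 : (0:ℝ) ≤ if θm = θ then (1:ℝ) else 0 := by split <;> norm_num
    have h3 : 0 ≤ (1 - ε) * c.dist.w θ := mul_nonneg (by linarith) h1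
    have h4 : 0 ≤ ε * (if θm = θ then (1:ℝ) else 0) := mul_nonneg hε0.le h2
    linarith
  have hw'supp : ((1 - ε) • c.dist.w + ε • Finsupp.single θm (1:ℝ)).support = U := by
    apply Finset.Subset.antisymm
    · refine Finsupp.support_add.trans (Finset.union_subset
        (Finsupp.support_smul.trans hUsub)
        (Finsupp.support_smul.trans (Finsupp.support_single_subset.trans
          (Finset.singleton_subset_iff.mpr hθmU))))
    · intro θ hθ
      rw [Finsupp.mem_support_iff]
      rcases Finset.mem_insert.mp hθ with h | h
      · subst h
        have h0 : c.dist.w θm = 0 := Finsupp.notMem_support_iff.mp hθm_not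
        simp only [Finsupp.add_apply, Finsupp.smul_apply, smul_eq_mul,
          Finsupp.single_eq_same, h0, mul_zero, zero_add, mul_one]
        exact ne_of_gt hε0
      · have h0 : 0 < c.dist.w θ :=
          lt_of_le_of_ne (c.dist.nonneg θ) (Ne.symm (Finsupp.mem_support_iff.mp h))
        simp only [Finsupp.add_apply, Finsupp.smul_apply, smul_eq_mul, Finsupp.single_apply]
        have h2 : (0:ℝ) ≤ if θm = θ then (1:ℝ) else 0 := by split <;> norm_num
        have h3 : 0 < (1 - ε) * c.dist.w θ := mul_pos (by linarith) h0
        have h4 : 0 ≤ ε * (if θm = θ then (1:ℝ) else 0) := mul_nonneg hε0.le h2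
        intro hcontra
        linarith [hcontra]
  have hsum_cw1 : ∑ θ ∈ U, c.dist.w θ = 1 := by
    rw [hU, Finset.sum_insert hθm_not, Finsupp.notMem_support_iff.mp hθm_not, zero_add]
    exact c.dist.total
  have hsingle_sum : ∑ θ ∈ U, (Finsupp.single θm (1:ℝ)) θ = 1 := by
    have hz0 : ∀ θ ∈ c.supp, (Finsupp.single θm (1:ℝ)) θ = 0 := by
      intro θ hθ
      have hne : ¬ θm = θ := fun h => hθm_not (by rwa [h])
      rw [Finsupp.single_apply, if_neg hne]
    rw [hU, Finset.sum_insert hθm_not, Finsupp.single_eq_same, Finset.sum_eq_zero hz0,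
      add_zero]
  have hw'total : ∑ θ ∈ ((1 - ε) • c.dist.w + ε • Finsupp.single θm (1:ℝ)).support,
      ((1 - ε) • c.dist.w + ε • Finsupp.single θm (1:ℝ)) θ = 1 := by
    rw [hw'supp]
    have hexp : ∀ θ ∈ U, ((1 - ε) • c.dist.w + ε • Finsupp.single θm (1:ℝ)) θ
        = (1 - ε) * c.dist.w θ + ε * (Finsupp.single θm (1:ℝ)) θ := by
      intro θ _
      simp only [Finsupp.add_apply, Finsupp.smul_apply, smul_eq_mul]
    rw [Finset.sum_congr rfl hexp, Finset.sum_add_distrib, ← Finset.mul_sum, ← Finset.mul_sum,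
      hsum_cw1, hsingle_sum]
    ring
  set D : TypeDist A :=
    ⟨(1 - ε) • c.dist.w + ε • Finsupp.single θm (1:ℝ), hw'nn, hw'total⟩ with hD
  have hDsupp : D.w.support = U := hw'supp
  -- the mutant behaviour rules are admissible
  have hbN' : ∀ θ ∈ D.w.support, ∀ θ' ∈ D.w.support,
      M.q θ.2 θ'.2 + M.q θ'.2 θ.2 < 1 →
      (mutBN c θm θbar θ θ', mutBN c θm θbar θ' θ) ∈ NE θ.1 θ'.1 := by
    intro θ hθ θ' hθ' hq
    rw [hDsupp, hU, Finset.mem_insert] at hθ hθ'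
    by_cases e1 : θ = θm
    · subst e1
      by_cases e2 : θ' = θm
      · subst e2
        simp only [hpref]
        exact ⟨mem_BR_const t _ _, mem_BR_const t _ _⟩
      · have hθ'c : θ' ∈ c.supp := hθ'.resolve_left e2
        have hq' : M.q θbar.2 θ'.2 + M.q θ'.2 θbar.2 < 1 := by rw [hlev] at hq; exact hq
        obtain ⟨h1, h2⟩ := c.bN_mem θbar hbar θ' hθ'c hq'
        have hm1 : mutBN c θm θbar θm θ' = c.bN θbar θ' := by simp [mutBN, e2]
        have hm2 : mutBN c θm θbar θ' θm = c.bN θ' θbar := by simp [mutBN, e2]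
        rw [hm1, hm2]
        exact ⟨by rw [hpref]; exact mem_BR_const t _ _, h2⟩
    · by_cases e2 : θ' = θm
      · subst e2
        have hθc : θ ∈ c.supp := hθ.resolve_left e1
        have hq' : M.q θ.2 θbar.2 + M.q θbar.2 θ.2 < 1 := by rw [hlev] at hq; exact hq
        obtain ⟨h1, h2⟩ := c.bN_mem θ hθc θbar hbar hq'
        have hm1 : mutBN c θm θbar θ θm = c.bN θ θbar := by simp [mutBN, e1]
        have hm2 : mutBN c θm θbar θm θ = c.bN θbar θ := by simp [mutBN, e1]
        rw [hm1, hm2]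
        exact ⟨h1, by rw [hpref]; exact mem_BR_const t _ _⟩
      · have hθc : θ ∈ c.supp := hθ.resolve_left e1
        have hθ'c : θ' ∈ c.supp := hθ'.resolve_left e2
        have hm1 : mutBN c θm θbar θ θ' = c.bN θ θ' := by simp [mutBN, e1, e2]
        have hm2 : mutBN c θm θbar θ' θ = c.bN θ' θ := by simp [mutBN, e1, e2]
        rw [hm1, hm2]
        exact c.bN_mem θ hθc θ' hθ'c hq
  have hbD' : ∀ θ ∈ D.w.support, ∀ θ' ∈ D.w.support, θ'.2 < θ.2 →
      (mutBD c θm θbar θlow s s' θ θ', mutBD c θm θbar θlow s s' θ' θ) ∈ DE θ.1 θ'.1 := by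
    intro θ hθ θ' hθ' hlt'
    rw [hDsupp, hU, Finset.mem_insert] at hθ hθ'
    by_cases e1 : θ = θm
    · subst e1
      by_cases e2 : θ' = θm
      · subst e2; exact absurd hlt' (lt_irrefl _)
      · have hθ'c : θ' ∈ c.supp := hθ'.resolve_left e2
        by_cases e3 : θ' = θlow
        · rw [e3]
          have hm1 : mutBD c θm θbar θlow s s' θm θlow = s := by simp [mutBD]
          have hm2 : mutBD c θm θbar θlow s s' θlow θm = s' := by simp [mutBD, hlowne]
          rw [hm1, hm2, hpref]
          exact mem_DE_const t _ s s' hs'U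
        · have hm1 : mutBD c θm θbar θlow s s' θm θ' = c.bD θbar θ' := by
            simp [mutBD, e2, e3]
          have hm2 : mutBD c θm θbar θlow s s' θ' θm = c.bD θ' θbar := by
            simp [mutBD, e2, e3]
          have hlt'' : θ'.2 < θbar.2 := by rw [hlev] at hlt'; exact hlt'
          have hUn := (c.bD_mem θbar hbar θ' hθ'c hlt'').1
          rw [hm1, hm2, hpref]
          exact mem_DE_const t _ _ _ hUn
    · by_cases e2 : θ' = θm
      · subst e2
        have hθc : θ ∈ c.supp := hθ.resolve_left e1
        exact absurd hlt' (not_lt.mpr (by rw [hlev]; exact hmax θ hθc))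
      · have hθc : θ ∈ c.supp := hθ.resolve_left e1
        have hθ'c : θ' ∈ c.supp := hθ'.resolve_left e2
        have hm1 : mutBD c θm θbar θlow s s' θ θ' = c.bD θ θ' := by simp [mutBD, e1, e2]
        have hm2 : mutBD c θm θbar θlow s s' θ' θ = c.bD θ' θ := by simp [mutBD, e1, e2]
        rw [hm1, hm2]
        exact c.bD_mem θ hθc θ' hθ'c hlt'
  set ct : Config M :=
    ⟨D, mutBN c θm θbar, mutBD c θm θbar θlow s s', hbN', hbD'⟩ with hct
  have hctbN : ct.bN = mutBN c θm θbar := rfl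
  have hctbD : ct.bD = mutBD c θm θbar θlow s s' := rfl
  have hctsupp : ct.supp = U := hDsupp
  have hfocal : Focal c ct := by
    constructor
    · intro θ hθ
      rw [hctsupp, hU]
      exact Finset.mem_insert_of_mem hθ
    · intro θ hθc θ' hθ'c
      have e1 : θ ≠ θm := fun h => hθm_not (h ▸ hθc)
      have e2 : θ' ≠ θm := fun h => hθm_not (h ▸ hθ'c)
      constructor
      · show mutBN c θm θbar θ θ' = c.bN θ θ'
        simp [mutBN, e1, e2]
      · show mutBD c θm θbar θlow s s' θ θ' = c.bD θ θ'
        simp [mutBD, e1, e2]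
  have hNSS : IsNSSOn (typePay ct) ct.supp c.dist := hKey ε hεmem ct hfocal rfl
  -- payoff abbreviations
  set LL : GType A → ℝ := fun θ0 => ∑ θ' ∈ U, c.dist.w θ' * typePay ct θ0 θ' with hLL
  set PP : ℝ := ∑ θ ∈ U, c.dist.w θ * LL θ with hPP
  -- every type in the enlarged support earns at most the average
  have ha : ∀ θ0 ∈ U, LL θ0 ≤ PP := by
    intro θ0 hθ0
    have hνsub : (deltaDist θ0 : TypeDist A).w.support ⊆ ct.supp := by
      rw [deltaDist_w, hctsupp]
      exact Finsupp.support_single_subset.trans (Finset.singleton_subset_iff.mpr hθ0)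
    obtain ⟨εb2, hεb2, h2⟩ := hNSS (deltaDist θ0) hνsub
    have hall : ∀ ε2 : ℝ, 0 < ε2 → ε2 < εb2 →
        (1 - ε2) * LL θ0 + ε2 * typePay ct θ0 θ0
          ≤ (1 - ε2) * PP + ε2 * (∑ θ ∈ U, c.dist.w θ * typePay ct θ θ0) := by
      intro ε2 h0 h1
      have hineq := h2 ε2 ⟨h0, h1⟩
      simp only [deltaDist_w] at hineq
      have hρsub : ((1 - ε2) • c.dist.w + ε2 • Finsupp.single θ0 (1:ℝ)).support ⊆ U :=
        Finsupp.support_add.trans (Finset.union_subset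
          (Finsupp.support_smul.trans hUsub)
          (Finsupp.support_smul.trans (Finsupp.support_single_subset.trans
            (Finset.singleton_subset_iff.mpr hθ0))))
      rw [playT_left_single (typePay ct) θ0 _ U hθ0 hρsub,
        sum_mix U c.dist.w θ0 hθ0 ε2 (typePay ct) θ0,
        playT_eq_sum (typePay ct) c.dist.w _ U hUsub hρsub,
        double_mix U c.dist.w c.dist.w θ0 hθ0 ε2 (typePay ct)] at hineq
      simp only [hPP, hLL]
      linarith [hineq]
    exact le_of_forall_eps hεb2.1 hall
  -- the mutant strictly outperforms θbar
  have hd : LL θbar < LL θm := by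
    have hq1 : M.q θlow.2 θbar.2 = 0 := hq0 _ _ (lt_asymm hlt)
    have hqpos : 0 < M.q θbar.2 θlow.2 := (M.q_pos_iff _ _).mpr hlt
    have hcwlow : 0 < c.dist.w θlow :=
      lt_of_le_of_ne (c.dist.nonneg θlow) (Ne.symm (Finsupp.mem_support_iff.mp hlow))
    have hkey : ∑ θ' ∈ U, (c.dist.w θ' * typePay ct θm θ' - c.dist.w θ' * typePay ct θbar θ')
        = c.dist.w θlow * ((M.q θbar.2 θlow.2 + M.q θlow.2 θbar.2) *
            (exPay M.π s s' - exPay M.π (c.bD θbar θlow) (c.bD θlow θbar))) := by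
      have hz : ∀ θ' ∈ U, θ' ≠ θlow →
          c.dist.w θ' * typePay ct θm θ' - c.dist.w θ' * typePay ct θbar θ' = 0 := by
        intro θ' hθ'U hne
        rcases Finset.mem_insert.mp hθ'U with h | h
        · rw [h, Finsupp.notMem_support_iff.mp hθm_not]; ring
        · have e2 : θ' ≠ θm := fun hh => hθm_not (hh ▸ h)
          have heq : typePay ct θm θ' = typePay ct θbar θ' := by
            simp only [typePay, condFit, hctbN, hctbD, hlev]
            rw [show mutBD c θm θbar θlow s s' θm θ' = c.bD θbar θ' by simp [mutBD, hne, e2],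
              show mutBD c θm θbar θlow s s' θ' θm = c.bD θ' θbar by
                simp [mutBD, e2, hbarne, hne],
              show mutBD c θm θbar θlow s s' θbar θ' = c.bD θbar θ' by
                simp [mutBD, hbarne, e2],
              show mutBD c θm θbar θlow s s' θ' θbar = c.bD θ' θbar by
                simp [mutBD, e2, hbarne],
              show mutBN c θm θbar θm θ' = c.bN θbar θ' by simp [mutBN, e2],
              show mutBN c θm θbar θ' θm = c.bN θ' θbar by simp [mutBN, e2],
              show mutBN c θm θbar θbar θ' = c.bN θbar θ' by simp [mutBN, hbarne, e2],
              show mutBN c θm θbar θ' θbar = c.bN θ' θbar by simp [mutBN, e2, hbarne]]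
          rw [heq]; ring
      rw [Finset.sum_eq_single_of_mem θlow hθlowU hz]
      have h1 : typePay ct θm θlow
          = (M.q θbar.2 θlow.2 + M.q θlow.2 θbar.2) * exPay M.π s s'
            + (1 - M.q θbar.2 θlow.2 - M.q θlow.2 θbar.2)
              * exPay M.π (c.bN θbar θlow) (c.bN θlow θbar) - M.k θbar.2 := by
        simp only [typePay, condFit, hctbN, hctbD, hlev]
        rw [show mutBD c θm θbar θlow s s' θm θlow = s by simp [mutBD],
          show mutBD c θm θbar θlow s s' θlow θm = s' by simp [mutBD, hlowne],
          show mutBN c θm θbar θm θlow = c.bN θbar θlow by simp [mutBN, hlowne],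
          show mutBN c θm θbar θlow θm = c.bN θlow θbar by simp [mutBN, hlowne]]
      have h2 : typePay ct θbar θlow
          = (M.q θbar.2 θlow.2 + M.q θlow.2 θbar.2)
              * exPay M.π (c.bD θbar θlow) (c.bD θlow θbar)
            + (1 - M.q θbar.2 θlow.2 - M.q θlow.2 θbar.2)
              * exPay M.π (c.bN θbar θlow) (c.bN θlow θbar) - M.k θbar.2 := by
        simp only [typePay, condFit, hctbN, hctbD]
        rw [show mutBD c θm θbar θlow s s' θbar θlow = c.bD θbar θlow by
            simp [mutBD, hbarne, hlowne],
          show mutBD c θm θbar θlow s s' θlow θbar = c.bD θlow θbar by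
            simp [mutBD, hlowne, hbarne],
          show mutBN c θm θbar θbar θlow = c.bN θbar θlow by simp [mutBN, hbarne, hlowne],
          show mutBN c θm θbar θlow θbar = c.bN θlow θbar by simp [mutBN, hlowne, hbarne]]
      rw [h1, h2]; ring
    have hpos : 0 < c.dist.w θlow * ((M.q θbar.2 θlow.2 + M.q θlow.2 θbar.2) *
        (exPay M.π s s' - exPay M.π (c.bD θbar θlow) (c.bD θlow θbar))) := by
      apply mul_pos hcwlow
      apply mul_pos
      · rw [hq1, add_zero]; exact hqpos
      · linarith
    have hsub : LL θm - LL θbar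
        = ∑ θ' ∈ U, (c.dist.w θ' * typePay ct θm θ' - c.dist.w θ' * typePay ct θbar θ') := by
      simp only [hLL]
      rw [Finset.sum_sub_distrib]
    linarith [hsub, hkey, hpos]
  -- every incumbent earns exactly the average, contradiction
  have hnn : ∀ θ ∈ U, 0 ≤ c.dist.w θ * (PP - LL θ) := fun θ hθ =>
    mul_nonneg (c.dist.nonneg θ) (sub_nonneg.mpr (ha θ hθ))
  have hb : ∑ θ ∈ U, c.dist.w θ * (PP - LL θ) = 0 := by
    have hexp : ∀ θ ∈ U, c.dist.w θ * (PP - LL θ)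
        = c.dist.w θ * PP - c.dist.w θ * LL θ := fun θ _ => by ring
    rw [Finset.sum_congr rfl hexp, Finset.sum_sub_distrib, ← Finset.sum_mul, hsum_cw1,
      one_mul, ← hPP, sub_self]
  have hterm := (Finset.sum_eq_zero_iff_of_nonneg hnn).mp hb θbar hθbarU
  have hcwbar : c.dist.w θbar ≠ 0 := Finsupp.mem_support_iff.mp hbar
  have hLbar : PP - LL θbar = 0 := by
    rcases mul_eq_zero.mp hterm with h | h
    · exact absurd h hcwbar
    · exact h
  have hm := ha θm hθmU
  linarith [hd, hm, hLbar]
end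
end

section
/- Let G be the Rock-Paper-Scissors game and let u^π be the materialistic preference u^π(a,a')=π(a,a') for all a,a'. Assume q(n,n')=1 whenever n>n'. Assume (a) there is an N with k_N≤2<k_{N+1}, and (b) 1>k_{n+1}−k_n for all n≤N. Then there exists a neutrally stable configuration (μ*,b*) such that C(μ*)⊆{(u^π,n)}_{n=1}^{N}, |C(μ*)|>1, and the behaviour of incumbents is: whenever two matched incumbents have different cognitive levels, the higher-level one plays Paper and the lower-level one plays Rock (i.e. b*^D of the higher type is P and of the lower type is R), and whenever two matched incumbents have the same cognitive level they both play the uniform mixed strategy over {R,P,S}. -/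
open scoped Classical
set_option maxHeartbeats 1000000

noncomputable section

variable {A : Type} [Fintype A]

/-- Rock-Paper-Scissors payoffs, with `R = 0`, `P = 1`, `S = 2`. -/
def rps : Fin 3 → Fin 3 → ℝ := fun a a' =>
  if a = a' then 0 else if a = a' + 1 then 1 else -1

/-- The uniform mixed strategy. -/
def uniformStrat (A : Type) [Fintype A] [Nonempty A] : Mixed A :=
  ⟨fun _ => (Fintype.card A : ℝ)⁻¹, by
    have h0 : (0:ℝ) < (Fintype.card A : ℝ) := by exact_mod_cast Fintype.card_pos
    refine ⟨fun _ => by positivity, ?_⟩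
    rw [Finset.sum_const, Finset.card_univ, nsmul_eq_mul, mul_inv_cancel₀ (ne_of_gt h0)]⟩


/-! ### Auxiliary lemmas -/

section AuxLemmas

open Finset

/-- Ville-type theorem: an antisymmetric matrix game has a "safe" mixed strategy. -/
lemma sum_sum_antisymm' {α : Type*} (s : Finset α) (w : α → ℝ) (C : α → α → ℝ)
    (hC : ∀ i j, C i j = -C j i) : ∑ i ∈ s, ∑ j ∈ s, w i * w j * C i j = 0 := by
  have h1 : ∑ i ∈ s, ∑ j ∈ s, w i * w j * C i j = ∑ i ∈ s, ∑ j ∈ s, -(w i * w j * C j i) := by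
    refine Finset.sum_congr rfl fun i _ => Finset.sum_congr rfl fun j _ => ?_
    rw [hC i j]; ring
  have h2 : ∑ i ∈ s, ∑ j ∈ s, -(w i * w j * C j i) = -(∑ i ∈ s, ∑ j ∈ s, w i * w j * C j i) := by
    simp
  have h3 : ∑ i ∈ s, ∑ j ∈ s, w i * w j * C j i = ∑ i ∈ s, ∑ j ∈ s, w i * w j * C i j := by
    rw [Finset.sum_comm]
    exact Finset.sum_congr rfl fun i _ => Finset.sum_congr rfl fun j _ => by ring
  linarith

lemma sum_swap_antisymm {α : Type*} (s t : Finset α) (y z : α → ℝ) (C : α → α → ℝ)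
    (hC : ∀ i j, C i j = -C j i) :
    ∑ i ∈ s, ∑ j ∈ t, y i * z j * C i j = -∑ i ∈ t, ∑ j ∈ s, z i * y j * C i j := by
  rw [Finset.sum_comm, ← Finset.sum_neg_distrib]
  refine Finset.sum_congr rfl fun a _ => ?_
  rw [← Finset.sum_neg_distrib]
  refine Finset.sum_congr rfl fun b _ => ?_
  rw [hC b a]; ring

theorem ville {n : ℕ} (hn : 0 < n) (Q : Fin n → Fin n → ℝ) (hQ : ∀ i j, Q i j = -Q j i) :
    ∃ μ : Fin n → ℝ, (∀ i, 0 ≤ μ i) ∧ ∑ i, μ i = 1 ∧ ∀ i, ∑ j, Q i j * μ j ≤ 0 := by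
  by_contra hcon
  push_neg at hcon
  set L : (Fin n → ℝ) →ₗ[ℝ] (Fin n → ℝ) := Matrix.mulVecLin (Matrix.of Q) with hL
  have hLapp : ∀ (μ : Fin n → ℝ) (i : Fin n), L μ i = ∑ j, Q i j * μ j := by
    intro μ i
    simp [hL, Matrix.mulVecLin, Matrix.mulVec, dotProduct]
  set S : Set (Fin n → ℝ) := stdSimplex ℝ (Fin n) with hS
  set C : Set (Fin n → ℝ) := L '' S with hC
  set K : Set (Fin n → ℝ) := { y | ∀ i, y i ≤ 0 } with hK
  have hdisj : Disjoint C K := by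
    rw [Set.disjoint_left]
    rintro y ⟨μ, hμ, rfl⟩ hyK
    obtain ⟨i, hi⟩ := hcon μ hμ.1 hμ.2
    exact absurd (hyK i) (by rw [hLapp]; exact not_le.2 hi)
  have hCc : IsCompact C := ((isCompact_stdSimplex ℝ (Fin n)).image L.continuous_of_finiteDimensional)
  have hCconv : Convex ℝ C := (convex_stdSimplex ℝ (Fin n)).linear_image L
  have hKconv : Convex ℝ K := by
    intro y hy z hz a b ha hb hab
    intro i
    have h1 := hy i; have h2 := hz i
    have : a * y i + b * z i ≤ 0 := by nlinarith
    simpa using this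
  have hKcl : IsClosed K := by
    have : K = ⋂ i, { y : Fin n → ℝ | y i ≤ 0 } := by
      ext y; simp [hK]
    rw [this]
    exact isClosed_iInter fun i => isClosed_le (continuous_apply i) continuous_const
  obtain ⟨f, u, v, hfC, huv, hfK⟩ :=
    geometric_hahn_banach_compact_closed hCconv hCc hKconv hKcl hdisj
  have hv0 : v < 0 := by
    have h0 : (0 : Fin n → ℝ) ∈ K := fun i => le_refl 0
    have := hfK _ h0
    simpa using this
  set p : Fin n → ℝ := fun i => f (Pi.single i (1:ℝ)) with hp
  have hfy : ∀ y : Fin n → ℝ, f y = ∑ i, y i * p i := by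
    intro y
    have hy : y = ∑ i, y i • (Pi.single i (1:ℝ) : Fin n → ℝ) := by
      ext j
      rw [Finset.sum_apply]
      simp [Pi.single_apply, eq_comm]
    calc f y = f (∑ i, y i • (Pi.single i (1:ℝ) : Fin n → ℝ)) := by rw [← hy]
      _ = ∑ i, y i * p i := by rw [map_sum]; simp [hp, smul_eq_mul]
  have hple : ∀ i, p i ≤ 0 := by
    intro i
    by_contra hpi
    push_neg at hpi
    set t : ℝ := (1 - v) / p i with ht
    have htp : t * p i = 1 - v := div_mul_cancel₀ _ (ne_of_gt hpi)
    have hyK : ((-t) • (Pi.single i (1:ℝ) : Fin n → ℝ)) ∈ K := by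
      intro j
      have h1 : (0:ℝ) ≤ t := div_nonneg (by linarith) hpi.le
      by_cases hj : j = i <;> simp [hj, Pi.single_apply] <;> linarith
    have := hfK _ hyK
    rw [map_smul] at this
    have : v < -t * p i := by simpa using this
    rw [neg_mul, htp] at this
    linarith
  set q : Fin n → ℝ := fun i => -p i with hq
  have hq0 : ∀ i, 0 ≤ q i := fun i => neg_nonneg.2 (hple i)
  have hfLν : ∀ μ ∈ S, (0:ℝ) < ∑ i, L μ i * q i := by
    intro μ hμ
    have h := hfC _ ⟨μ, hμ, rfl⟩
    have hneg : f (L μ) < 0 := lt_trans h (lt_trans huv hv0)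
    rw [hfy] at hneg
    have : ∑ i, L μ i * q i = -∑ i, L μ i * p i := by
      rw [← Finset.sum_neg_distrib]
      exact Finset.sum_congr rfl fun i _ => by simp [hq]
    rw [this]
    linarith
  have hsq : 0 < ∑ i, q i := by
    rcases (Finset.sum_nonneg fun i _ => hq0 i).lt_or_eq with h | h
    · exact h
    · exfalso
      have hall : ∀ i, q i = 0 := by
        intro i
        have := (Finset.sum_eq_zero_iff_of_nonneg (fun i _ => hq0 i)).1 h.symm
        exact this i (Finset.mem_univ i)
      have hμ0 : (fun _ : Fin n => (n:ℝ)⁻¹) ∈ S := by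
        constructor
        · intro i; positivity
        · rw [Finset.sum_const, Finset.card_univ, Fintype.card_fin, nsmul_eq_mul]
          field_simp
      have := hfLν _ hμ0
      simp only [hall, mul_zero, Finset.sum_const_zero] at this
      exact lt_irrefl 0 this
  set ν : Fin n → ℝ := fun i => q i / (∑ j, q j) with hν
  have hνS : ν ∈ S := by
    constructor
    · intro i; exact div_nonneg (hq0 i) hsq.le
    · rw [← Finset.sum_div]; field_simp
  have hpos := hfLν ν hνS
  have hzero : ∑ i, L ν i * q i = (∑ i, ∑ j, q i * q j * Q i j) / (∑ j, q j) := by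
    rw [Finset.sum_div]
    refine Finset.sum_congr rfl fun i _ => ?_
    rw [hLapp, Finset.sum_div, Finset.sum_mul]
    refine Finset.sum_congr rfl fun j _ => ?_
    simp only [hν]
    ring
  have hanti0 : ∑ i, ∑ j, q i * q j * Q i j = 0 := sum_sum_antisymm' Finset.univ q Q hQ
  rw [hzero, hanti0, zero_div] at hpos
  exact lt_irrefl 0 hpos

/-! RPS-specific lemmas. -/

lemma rps_le_one (a a' : Fin 3) : rps a a' ≤ 1 := by
  unfold rps; split_ifs <;> norm_num

lemma rps_antisymm (a a' : Fin 3) : rps a a' = - rps a' a := by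
  fin_cases a <;> fin_cases a' <;> simp [rps]

lemma rps_row_sum (a : Fin 3) : ∑ a', rps a a' = 0 := by
  fin_cases a <;> simp [Fin.sum_univ_three, rps] <;> norm_num

lemma rps_succ (a : Fin 3) : rps (a + 1) a = 1 := by
  fin_cases a <;> simp [rps]

lemma exPay_le_one (σ σ' : Mixed (Fin 3)) : exPay rps σ σ' ≤ 1 := by
  have h : exPay rps σ σ' ≤ ∑ a, ∑ a', σ.1 a * σ'.1 a' * 1 := by
    refine Finset.sum_le_sum fun a _ => Finset.sum_le_sum fun a' _ => ?_
    exact mul_le_mul_of_nonneg_left (rps_le_one a a') (mul_nonneg (σ.2.1 a) (σ'.2.1 a'))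
  calc exPay rps σ σ' ≤ ∑ a, ∑ a', σ.1 a * σ'.1 a' * 1 := h
    _ = (∑ a, σ.1 a) * (∑ a', σ'.1 a') := by
        rw [Finset.sum_mul]
        exact Finset.sum_congr rfl fun a _ => by rw [Finset.mul_sum]; simp [mul_comm]
    _ = 1 := by rw [σ.2.2, σ'.2.2, one_mul]

lemma exPay_swap (σ σ' : Mixed (Fin 3)) : exPay rps σ σ' = - exPay rps σ' σ := by
  unfold exPay
  rw [← Finset.sum_neg_distrib, Finset.sum_comm]
  refine Finset.sum_congr rfl fun a _ => ?_
  rw [← Finset.sum_neg_distrib]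
  refine Finset.sum_congr rfl fun a' _ => ?_
  rw [rps_antisymm a' a]; ring

lemma exPay_uniform_right (σ : Mixed (Fin 3)) : exPay rps σ (uniformStrat (Fin 3)) = 0 := by
  unfold exPay
  refine Finset.sum_eq_zero fun a _ => ?_
  have h : ∑ a', σ.1 a * (uniformStrat (Fin 3)).1 a' * rps a a'
      = σ.1 a * (3:ℝ)⁻¹ * ∑ a', rps a a' := by
    rw [Finset.mul_sum]
    refine Finset.sum_congr rfl fun a' _ => ?_
    show σ.1 a * ((Fintype.card (Fin 3) : ℝ))⁻¹ * rps a a' = σ.1 a * (3:ℝ)⁻¹ * rps a a'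
    norm_num
  rw [h, rps_row_sum, mul_zero]

lemma exPay_uniform_left (σ' : Mixed (Fin 3)) : exPay rps (uniformStrat (Fin 3)) σ' = 0 := by
  rw [exPay_swap, exPay_uniform_right, neg_zero]

lemma exPay_pure_pure (f : Fin 3 → Fin 3 → ℝ) (a b : Fin 3) :
    exPay f (pureStrat a) (pureStrat b) = f a b := by
  unfold exPay pureStrat
  rw [Finset.sum_eq_single a]
  · rw [Finset.sum_eq_single b] <;> simp +contextual
  · intro c _ hc; simp [hc]
  · simp

lemma exPay_pure_left (f : Fin 3 → Fin 3 → ℝ) (a : Fin 3) (σ' : Mixed (Fin 3)) :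
    exPay f (pureStrat a) σ' = ∑ a', σ'.1 a' * f a a' := by
  unfold exPay pureStrat
  rw [Finset.sum_eq_single a]
  · simp
  · intro c _ hc
    refine Finset.sum_eq_zero fun a' _ => by simp [hc]
  · simp

lemma exPay_decomp (f : Fin 3 → Fin 3 → ℝ) (σ σ' : Mixed (Fin 3)) :
    exPay f σ σ' = ∑ a, σ.1 a * exPay f (pureStrat a) σ' := by
  have h : ∀ a : Fin 3, σ.1 a * exPay f (pureStrat a) σ' = ∑ a', σ.1 a * σ'.1 a' * f a a' := by
    intro a
    rw [exPay_pure_left, Finset.mul_sum]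
    exact Finset.sum_congr rfl fun a' _ => by ring
  calc exPay f σ σ' = ∑ a, ∑ a', σ.1 a * σ'.1 a' * f a a' := rfl
    _ = ∑ a, σ.1 a * exPay f (pureStrat a) σ' := Finset.sum_congr rfl fun a _ => (h a).symm

lemma exists_pure_undom (u : Fin 3 → Fin 3 → ℝ) : ∃ a, pureStrat a ∈ Undom u := by
  obtain ⟨a, _, ha⟩ := Finset.exists_max_image (Finset.univ : Finset (Fin 3))
    (fun a => exPay u (pureStrat a) (uniformStrat (Fin 3))) ⟨0, Finset.mem_univ 0⟩
  refine ⟨a, uniformStrat (Fin 3), fun τ => ?_⟩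
  rw [exPay_decomp u τ]
  calc ∑ b, τ.1 b * exPay u (pureStrat b) (uniformStrat (Fin 3))
      ≤ ∑ b, τ.1 b * exPay u (pureStrat a) (uniformStrat (Fin 3)) := by
        refine Finset.sum_le_sum fun b _ => ?_
        exact mul_le_mul_of_nonneg_left (ha b (Finset.mem_univ b)) (τ.2.1 b)
    _ = exPay u (pureStrat a) (uniformStrat (Fin 3)) := by
        rw [← Finset.sum_mul, τ.2.2, one_mul]

lemma DE_rps_val (u : Fin 3 → Fin 3 → ℝ) (p : Mixed (Fin 3) × Mixed (Fin 3))
    (hp : p ∈ DE rps u) : exPay rps p.1 p.2 = 1 := by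
  obtain ⟨a, ha⟩ := exists_pure_undom u
  have h1 := hp.2 (pureStrat (a + 1)) (pureStrat a) ha
  rw [exPay_pure_pure, rps_succ] at h1
  exact le_antisymm (exPay_le_one _ _) h1

lemma NE_val_le (u : Fin 3 → Fin 3 → ℝ) (p : Mixed (Fin 3) × Mixed (Fin 3))
    (hp : p ∈ NE u rps) : exPay rps p.1 p.2 ≤ 0 := by
  have h := hp.2 (uniformStrat (Fin 3))
  rw [exPay_uniform_left] at h
  rw [exPay_swap]
  linarith

lemma mem_DE_PR : ((pureStrat 1, pureStrat 0) : Mixed (Fin 3) × Mixed (Fin 3)) ∈ DE rps rps := by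
  constructor
  · refine ⟨pureStrat 2, fun τ => ?_⟩
    rw [exPay_pure_pure]
    have h : rps 0 2 = 1 := by simp [rps]
    rw [h]
    exact exPay_le_one _ _
  · intro σ σ' _
    rw [exPay_pure_pure]
    have h : rps 1 0 = 1 := by simp [rps]
    rw [h]
    exact exPay_le_one _ _

lemma mem_NE_unif : ((uniformStrat (Fin 3), uniformStrat (Fin 3)) :
    Mixed (Fin 3) × Mixed (Fin 3)) ∈ NE rps rps := by
  constructor <;> intro τ <;>
    simp only [exPay_uniform_right, exPay_uniform_left, le_refl]

/-! The sign function on levels. -/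

def sg (n m : ℕ+) : ℝ := if m < n then 1 else if n < m then -1 else 0

lemma sg_of_lt {n m : ℕ+} (h : m < n) : sg n m = 1 := if_pos h

lemma sg_of_gt {n m : ℕ+} (h : n < m) : sg n m = -1 := by
  unfold sg; rw [if_neg (asymm h), if_pos h]

lemma sg_of_eq {n m : ℕ+} (h : n = m) : sg n m = 0 := by
  subst h; unfold sg; rw [if_neg (lt_irrefl _), if_neg (lt_irrefl _)]

lemma sg_antisymm (n m : ℕ+) : sg n m = - sg m n := by
  rcases lt_trichotomy n m with h | h | h
  · rw [sg_of_gt h, sg_of_lt h]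
  · rw [sg_of_eq h, sg_of_eq h.symm]; norm_num
  · rw [sg_of_lt h, sg_of_gt h]; norm_num

lemma sg_ge_neg_one (n m : ℕ+) : -1 ≤ sg n m := by
  unfold sg; split_ifs <;> norm_num

/-! Model-level lemmas. -/

lemma q_zero (M : Model (Fin 3)) {n m : ℕ+} (h : ¬ m < n) : M.q n m = 0 := by
  have h1 := M.q_nonneg n m
  have h2 : ¬ 0 < M.q n m := fun hp => h ((M.q_pos_iff n m).1 hp)
  linarith

lemma condFit_antisymm {M : Model (Fin 3)} (hpi : M.π = rps) (ct : Config M)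
    (θ θ' : GType (Fin 3)) : condFit ct θ θ' = - condFit ct θ' θ := by
  unfold condFit
  rw [hpi, exPay_swap (ct.bD θ θ') (ct.bD θ' θ), exPay_swap (ct.bN θ θ') (ct.bN θ' θ)]
  ring

lemma condFit_le_sg {M : Model (Fin 3)} (hpi : M.π = rps)
    (hq : ∀ n n' : ℕ+, n' < n → M.q n n' = 1) (ct : Config M)
    {θ θ' : GType (Fin 3)} (hθ : θ ∈ ct.supp) (hθ' : θ' ∈ ct.supp) (h1 : θ'.1 = rps) :
    condFit ct θ θ' ≤ sg θ.2 θ'.2 := by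
  rcases lt_trichotomy θ'.2 θ.2 with h | h | h
  · have e1 : M.q θ.2 θ'.2 = 1 := hq _ _ h
    have e2 : M.q θ'.2 θ.2 = 0 := q_zero M (asymm h)
    have hE := exPay_le_one (ct.bD θ θ') (ct.bD θ' θ)
    unfold condFit
    rw [hpi, e1, e2, sg_of_lt h]
    ring_nf
    linarith
  · have e1 : M.q θ.2 θ'.2 = 0 := q_zero M (by rw [h]; exact lt_irrefl _)
    have e2 : M.q θ'.2 θ.2 = 0 := q_zero M (by rw [h]; exact lt_irrefl _)
    have hne : (ct.bN θ θ', ct.bN θ' θ) ∈ NE θ.1 θ'.1 :=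
      ct.bN_mem θ hθ θ' hθ' (by rw [e1, e2]; norm_num)
    rw [h1] at hne
    have hb := NE_val_le θ.1 _ hne
    unfold condFit
    rw [hpi, e1, e2, sg_of_eq h.symm]
    simp only at hb
    ring_nf
    linarith
  · have e1 : M.q θ.2 θ'.2 = 0 := q_zero M (asymm h)
    have e2 : M.q θ'.2 θ.2 = 1 := hq _ _ h
    have hde : (ct.bD θ' θ, ct.bD θ θ') ∈ DE θ'.1 θ.1 := ct.bD_mem θ' hθ' θ hθ h
    rw [h1] at hde
    have hb := DE_rps_val θ.1 _ hde
    simp only at hb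
    have hswap := exPay_swap (ct.bD θ θ') (ct.bD θ' θ)
    unfold condFit
    rw [hpi, e1, e2, sg_of_gt h]
    rw [hswap, hb]
    ring_nf
    linarith

lemma playT_ext (F : GType (Fin 3) → GType (Fin 3) → ℝ) (y x : GType (Fin 3) →₀ ℝ)
    (s t : Finset (GType (Fin 3))) (hs : y.support ⊆ s) (ht : x.support ⊆ t) :
    playT F y x = ∑ θ ∈ s, ∑ θ' ∈ t, y θ * x θ' * F θ θ' := by
  unfold playT
  calc ∑ θ ∈ y.support, ∑ θ' ∈ x.support, y θ * x θ' * F θ θ'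
      = ∑ θ ∈ y.support, ∑ θ' ∈ t, y θ * x θ' * F θ θ' := by
        refine Finset.sum_congr rfl fun θ _ => Finset.sum_subset ht fun θ' _ h => ?_
        rw [Finsupp.notMem_support_iff.1 h]; ring
    _ = ∑ θ ∈ s, ∑ θ' ∈ t, y θ * x θ' * F θ θ' := by
        refine Finset.sum_subset hs fun θ _ h => Finset.sum_eq_zero fun θ' _ => ?_
        rw [Finsupp.notMem_support_iff.1 h]; ring

end AuxLemmas

/-- In Rock-Paper-Scissors, with certain deception of lower levels and small
but non-vanishing marginal cognitive costs, there is an NSC supported on materialistic types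
of levels `1,...,N` in which several cognitive levels coexist, a higher level plays Paper while
the lower level plays Rock, and equal levels play the uniform Nash equilibrium. -/
theorem stmt8 (M : Model (Fin 3)) (hpi : M.π = rps)
    (hq : ∀ n n' : ℕ+, n' < n → M.q n n' = 1)
    (N : ℕ+) (hN1 : M.k N ≤ 2) (hN2 : 2 < M.k (N + 1))
    (hmarg : ∀ n : ℕ+, n ≤ N → M.k (n + 1) - M.k n < 1) :
    ∃ c : Config M, IsNSC c ∧
      (∀ θ ∈ c.supp, θ.1 = rps ∧ θ.2 ≤ N) ∧
      1 < c.supp.card ∧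
      (∀ θ ∈ c.supp, ∀ θ' ∈ c.supp,
        (θ'.2 < θ.2 → c.bD θ θ' = pureStrat (1 : Fin 3) ∧ c.bD θ' θ = pureStrat (0 : Fin 3)) ∧
        (θ.2 = θ'.2 → c.bN θ θ' = uniformStrat (Fin 3))) := by
  classical
  have hkN1 : (1:ℝ) < M.k N := by have := hmarg N le_rfl; linarith
  set Nn : ℕ := (N : ℕ) with hNn
  have hNpos : 0 < Nn := N.2
  set lvl : Fin Nn → ℕ+ := fun i => ⟨(i : ℕ) + 1, Nat.succ_pos _⟩ with hlvl
  have hlvl_le : ∀ i, lvl i ≤ N := by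
    intro i
    have h1 : (i:ℕ) < Nn := i.isLt
    have h2 : ((lvl i : ℕ+) : ℕ) ≤ (N : ℕ) := by simp only [hlvl, PNat.mk_coe]; omega
    exact (PNat.coe_le_coe _ _).mp h2
  have hlvl_inj : Function.Injective lvl := by
    intro i j h
    have h2 : ((lvl i : ℕ+) : ℕ) = ((lvl j : ℕ+) : ℕ) := by rw [h]
    simp only [hlvl, PNat.mk_coe] at h2
    exact Fin.ext (by omega)
  set Q : Fin Nn → Fin Nn → ℝ :=
    fun i j => sg (lvl i) (lvl j) + M.k (lvl j) - M.k (lvl i) with hQ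
  obtain ⟨lam, hlam0, hlam1, hlamQ⟩ := ville hNpos Q
    (by intro i j; simp only [hQ]; rw [sg_antisymm]; ring)
  have hidx : ∀ n : ℕ+, n ≤ N → ∃ i : Fin Nn, lvl i = n := by
    intro n hn
    have h1 : (n:ℕ) ≤ Nn := (PNat.coe_le_coe _ _).mpr hn
    have h2 : 0 < (n:ℕ) := n.2
    refine ⟨⟨(n:ℕ) - 1, by omega⟩, ?_⟩
    apply PNat.coe_injective
    simp only [hlvl, PNat.mk_coe]
    omega
  have hexp : ∀ i : Fin Nn,
      (∑ j, lam j * sg (lvl i) (lvl j)) + (∑ j, lam j * M.k (lvl j)) - M.k (lvl i) ≤ 0 := by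
    intro i
    have h := hlamQ i
    have e : ∑ j, Q i j * lam j
        = (∑ j, lam j * sg (lvl i) (lvl j)) + (∑ j, lam j * M.k (lvl j))
          - M.k (lvl i) * ∑ j, lam j := by
      rw [Finset.mul_sum, ← Finset.sum_add_distrib, ← Finset.sum_sub_distrib]
      exact Finset.sum_congr rfl fun j _ => by simp only [hQ]; ring
    rw [e, hlam1, mul_one] at h
    linarith
  have hKle : ∑ j, lam j * M.k (lvl j) ≤ 1 := by
    obtain ⟨i0, hi0⟩ := hidx 1 N.one_le
    have h := hexp i0
    rw [hi0, M.k_one] at h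
    have hb : -(1:ℝ) ≤ ∑ j, lam j * sg 1 (lvl j) := by
      have hterm : ∀ j, -lam j ≤ lam j * sg 1 (lvl j) := by
        intro j
        nlinarith [hlam0 j, sg_ge_neg_one 1 (lvl j)]
      calc -(1:ℝ) = ∑ j, -lam j := by rw [Finset.sum_neg_distrib, hlam1]
        _ ≤ _ := Finset.sum_le_sum fun j _ => hterm j
    linarith
  have hmaster : ∀ n : ℕ+, ∑ j, lam j * sg n (lvl j) ≤ M.k n - ∑ j, lam j * M.k (lvl j) := by
    intro n
    by_cases hn : n ≤ N
    · obtain ⟨i0, hi0⟩ := hidx n hn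
      have h := hexp i0
      rw [hi0] at h
      linarith
    · push_neg at hn
      have h1 : ∑ j, lam j * sg n (lvl j) = 1 := by
        rw [← hlam1]
        refine Finset.sum_congr rfl fun j _ => ?_
        rw [sg_of_lt (lt_of_le_of_lt (hlvl_le j) hn), mul_one]
      have hN1n : N + 1 ≤ n := by
        rw [← PNat.coe_le_coe]
        have h3 := (PNat.coe_lt_coe _ _).mpr hn
        push_cast
        omega
      have h2 : M.k (N + 1) ≤ M.k n := M.k_mono.monotone hN1n
      linarith
  -- two distinct positive weights
  have htwo : ∃ i j : Fin Nn, i ≠ j ∧ 0 < lam i ∧ 0 < lam j := by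
    by_contra hcon
    push_neg at hcon
    obtain ⟨i0, hi0pos⟩ : ∃ i, 0 < lam i := by
      by_contra hall
      push_neg at hall
      have : ∑ j, lam j ≤ 0 := Finset.sum_nonpos fun j _ => hall j
      linarith
    have hzero : ∀ j, j ≠ i0 → lam j = 0 := by
      intro j hj
      have h := hcon i0 j (Ne.symm hj) hi0pos
      linarith [hlam0 j]
    have hsingle : ∀ i1 : Fin Nn, i1 ≠ i0 → Q i1 i0 ≤ 0 := by
      intro i1 hne
      have h := hlamQ i1
      have e : ∑ j, Q i1 j * lam j = Q i1 i0 * lam i0 := by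
        rw [Finset.sum_eq_single i0]
        · intro j _ hj; rw [hzero j hj, mul_zero]
        · intro h; exact absurd (Finset.mem_univ i0) h
      have hone : lam i0 = 1 := by
        have := hlam1
        rw [Finset.sum_eq_single i0 (fun j _ hj => hzero j hj)
          (fun h => absurd (Finset.mem_univ i0) h)] at this
        exact this
      rw [e, hone, mul_one] at h
      exact h
    by_cases htop : (i0 : ℕ) + 1 < Nn
    · set i1 : Fin Nn := ⟨(i0:ℕ)+1, htop⟩ with hi1
      have hne : i1 ≠ i0 := by
        intro h
        have h4 : (i0:ℕ) + 1 = (i0:ℕ) := congrArg Fin.val h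
        omega
      have h := hsingle i1 hne
      have hlt : lvl i0 < lvl i1 := by
        rw [← PNat.coe_lt_coe]
        simp only [hlvl, hi1, PNat.mk_coe]
        omega
      have hsucc : lvl i1 = lvl i0 + 1 := by
        apply PNat.coe_injective
        simp only [hlvl, hi1, PNat.mk_coe, PNat.add_coe, PNat.one_coe]
        rfl
      have hm := hmarg (lvl i0) (hlvl_le i0)
      simp only [hQ] at h
      rw [sg_of_lt hlt, hsucc] at h
      linarith
    · have hi0N : lvl i0 = N := by
        apply PNat.coe_injective
        have h5 := i0.isLt
        simp only [hlvl, PNat.mk_coe]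
        omega
      by_cases h1 : Nn = 1
      · have hNone : N = 1 := by
          apply PNat.coe_injective
          simp [← hNn, h1]
        rw [hNone, M.k_one] at hkN1
        linarith
      · set i1 : Fin Nn := ⟨0, hNpos⟩ with hi1
        have hne : i1 ≠ i0 := by
          intro h
          have h2 : (0:ℕ) = (i0:ℕ) := congrArg Fin.val h
          have h3 := i0.isLt
          omega
        have h := hsingle i1 hne
        have hlvl1 : lvl i1 = 1 := by
          apply PNat.coe_injective
          simp [hlvl, hi1, PNat.mk_coe, PNat.one_coe]
        have hlt : lvl i1 < lvl i0 := by
          rw [hlvl1, hi0N, ← PNat.coe_lt_coe]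
          have h6 : 2 ≤ Nn := by omega
          simp only [PNat.one_coe]
          omega
        simp only [hQ] at h
        rw [sg_of_gt hlt, hlvl1, hi0N, M.k_one] at h
        linarith
  -- the population
  set g : Fin Nn → GType (Fin 3) := fun i => (rps, lvl i) with hg
  have hg_inj : Function.Injective g := by
    intro i j h
    exact hlvl_inj (congrArg Prod.snd h)
  set w : GType (Fin 3) →₀ ℝ := ∑ i, Finsupp.single (g i) (lam i) with hw
  have hw_apply : ∀ i, w (g i) = lam i := by
    intro i
    rw [hw, Finsupp.finset_sum_apply]
    rw [Finset.sum_eq_single i]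
    · rw [Finsupp.single_apply, if_pos rfl]
    · intro j _ hj
      rw [Finsupp.single_apply, if_neg (fun h => hj (hg_inj h))]
    · intro h; exact absurd (Finset.mem_univ i) h
  have hw_out : ∀ θ, (∀ i, g i ≠ θ) → w θ = 0 := by
    intro θ hθ
    rw [hw, Finsupp.finset_sum_apply]
    exact Finset.sum_eq_zero fun j _ => by rw [Finsupp.single_apply, if_neg (hθ j)]
  have hw_nonneg : ∀ θ, 0 ≤ w θ := by
    intro θ
    by_cases hθ : ∃ i, g i = θ
    · obtain ⟨i, rfl⟩ := hθ
      rw [hw_apply]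
      exact hlam0 i
    · push_neg at hθ
      rw [hw_out θ hθ]
  have hsupp_sub : w.support ⊆ Finset.univ.image g := by
    intro θ hθ
    rw [Finsupp.mem_support_iff] at hθ
    by_contra hmem
    refine hθ (hw_out θ fun i hi => hmem ?_)
    rw [← hi]
    exact Finset.mem_image_of_mem g (Finset.mem_univ i)
  have hw_total : ∑ θ ∈ w.support, w θ = 1 := by
    have h1 : ∑ θ ∈ w.support, w θ = ∑ θ ∈ Finset.univ.image g, w θ :=
      Finset.sum_subset hsupp_sub (fun θ _ h => Finsupp.notMem_support_iff.1 h)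
    rw [h1, Finset.sum_image (fun i _ j _ h => hg_inj h), ← hlam1]
    exact Finset.sum_congr rfl fun i _ => hw_apply i
  have hsupp_rps : ∀ θ ∈ w.support, θ.1 = rps ∧ θ.2 ≤ N := by
    intro θ hθ
    obtain ⟨i, _, rfl⟩ := Finset.mem_image.1 (hsupp_sub hθ)
    exact ⟨rfl, hlvl_le i⟩
  -- the configuration
  set c : Config M :=
    { dist := ⟨w, hw_nonneg, hw_total⟩
      bN := fun _ _ => uniformStrat (Fin 3)
      bD := fun θ θ' =>
        if θ'.2 < θ.2 then pureStrat 1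
        else if θ.2 < θ'.2 then pureStrat 0 else uniformStrat (Fin 3)
      bN_mem := by
        intro θ hθ θ' hθ' _
        rw [(hsupp_rps θ hθ).1, (hsupp_rps θ' hθ').1]
        exact mem_NE_unif
      bD_mem := by
        intro θ hθ θ' hθ' h
        beta_reduce
        rw [if_pos h, if_neg (asymm h), if_pos h,
          (hsupp_rps θ hθ).1, (hsupp_rps θ' hθ').1]
        exact mem_DE_PR } with hc
  have hcw : c.dist.w = w := rfl
  have hcsupp : c.supp = w.support := rfl
  refine ⟨c, ?_, ?_, ?_, ?_⟩
  · -- IsNSC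
    intro μ'
    refine ⟨1/2, by norm_num, ?_⟩
    intro ε hε ct hfocal hdist
    intro ν hνsub
    refine ⟨1/2, by norm_num, ?_⟩
    intro ε' hε'
    set x : GType (Fin 3) →₀ ℝ := (1 - ε') • c.dist.w + ε' • ν.w with hx
    set U : Finset (GType (Fin 3)) := w.support ∪ ν.w.support with hU
    have hμsubU : w.support ⊆ U := Finset.subset_union_left
    have hνsubU : ν.w.support ⊆ U := Finset.subset_union_right
    have hxsubU : x.support ⊆ U := by
      refine subset_trans Finsupp.support_add ?_
      exact Finset.union_subset (subset_trans Finsupp.support_smul hμsubU)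
        (subset_trans Finsupp.support_smul hνsubU)
    have hxval : ∀ θ, x θ = (1 - ε') * w θ + ε' * ν.w θ := by
      intro θ
      rw [hx]
      simp [Finsupp.add_apply, Finsupp.smul_apply, smul_eq_mul, hcw]
    have hμ1 : ∑ θ ∈ U, w θ = 1 := by
      rw [← (Finset.sum_subset hμsubU (fun θ _ h => Finsupp.notMem_support_iff.1 h))]
      exact hw_total
    have hν1 : ∑ θ ∈ U, ν.w θ = 1 := by
      rw [← (Finset.sum_subset hνsubU (fun θ _ h => Finsupp.notMem_support_iff.1 h))]
      exact ν.total
    have hx1 : ∑ θ ∈ U, x θ = 1 := by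
      rw [Finset.sum_congr rfl (fun θ _ => hxval θ), Finset.sum_add_distrib,
        ← Finset.mul_sum, ← Finset.mul_sum, hμ1, hν1]
      ring
    have hanti : ∀ θ θ' : GType (Fin 3), condFit ct θ θ' = - condFit ct θ' θ :=
      fun θ θ' => condFit_antisymm hpi ct θ θ'
    -- translation of level sums
    have htrans : ∀ (h : GType (Fin 3) → ℝ),
        ∑ θ' ∈ U, w θ' * h θ' = ∑ i, lam i * h (g i) := by
      intro h
      rw [← (Finset.sum_subset hμsubU (fun θ _ hm => by
        rw [Finsupp.notMem_support_iff.1 hm, zero_mul]))]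
      rw [Finset.sum_subset hsupp_sub (fun θ _ hm => by
        rw [Finsupp.notMem_support_iff.1 hm, zero_mul])]
      rw [Finset.sum_image (fun i _ j _ hij => hg_inj hij)]
      exact Finset.sum_congr rfl fun i _ => by rw [hw_apply]
    -- the row bound
    have hrow : ∀ θ ∈ ct.supp,
        ∑ θ' ∈ U, w θ' * condFit ct θ θ' ≤ M.k θ.2 - ∑ j, lam j * M.k (lvl j) := by
      intro θ hθ
      rw [htrans (fun θ' => condFit ct θ θ')]
      refine le_trans (Finset.sum_le_sum (fun i _ => ?_)) (hmaster θ.2)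
      rcases (hlam0 i).lt_or_eq with hpos | heq
      · refine mul_le_mul_of_nonneg_left ?_ (hlam0 i)
        have hgi : g i ∈ c.supp := by
          rw [hcsupp, Finsupp.mem_support_iff, hw_apply]
          exact ne_of_gt hpos
        exact condFit_le_sg hpi hq ct hθ (hfocal.1 hgi) rfl
      · rw [← heq, zero_mul, zero_mul]
    -- key quantities
    have hKμ : ∑ θ ∈ U, w θ * M.k θ.2 = ∑ j, lam j * M.k (lvl j) :=
      htrans (fun θ' => M.k θ'.2)
    -- the central bound T ≤ Kν - Kμ
    have hT : ∑ θ ∈ U, ∑ θ' ∈ U, ν.w θ * w θ' * condFit ct θ θ'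
        ≤ (∑ θ ∈ U, ν.w θ * M.k θ.2) - ∑ θ ∈ U, w θ * M.k θ.2 := by
      have hstep : ∀ θ ∈ U, ∑ θ' ∈ U, ν.w θ * w θ' * condFit ct θ θ'
          ≤ ν.w θ * (M.k θ.2 - ∑ j, lam j * M.k (lvl j)) := by
        intro θ _
        have e : ∑ θ' ∈ U, ν.w θ * w θ' * condFit ct θ θ'
            = ν.w θ * ∑ θ' ∈ U, w θ' * condFit ct θ θ' := by
          rw [Finset.mul_sum]
          exact Finset.sum_congr rfl fun θ' _ => by ring
        rw [e]
        rcases (ν.nonneg θ).lt_or_eq with hpos | heq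
        · refine mul_le_mul_of_nonneg_left ?_ (ν.nonneg θ)
          refine hrow θ (hνsub ?_)
          rw [Finsupp.mem_support_iff]
          exact ne_of_gt hpos
        · rw [← heq, zero_mul, zero_mul]
      refine le_trans (Finset.sum_le_sum hstep) ?_
      rw [hKμ]
      have e2 : ∑ θ ∈ U, ν.w θ * (M.k θ.2 - ∑ j, lam j * M.k (lvl j))
          = (∑ θ ∈ U, ν.w θ * M.k θ.2)
            - (∑ j, lam j * M.k (lvl j)) * ∑ θ ∈ U, ν.w θ := by
        rw [Finset.mul_sum, ← Finset.sum_sub_distrib]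
        exact Finset.sum_congr rfl fun θ _ => by ring
      rw [e2, hν1, mul_one]
    -- rewrite the goal as double sums over U
    rw [hcw]
    rw [playT_ext (typePay ct) ν.w x U U hνsubU hxsubU,
        playT_ext (typePay ct) w x U U hμsubU hxsubU]
    have hexpand : ∀ y : GType (Fin 3) →₀ ℝ,
        ∑ θ ∈ U, ∑ θ' ∈ U, y θ * x θ' * typePay ct θ θ'
          = (1 - ε') * (∑ θ ∈ U, ∑ θ' ∈ U, y θ * w θ' * condFit ct θ θ')
            + ε' * (∑ θ ∈ U, ∑ θ' ∈ U, y θ * ν.w θ' * condFit ct θ θ')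
            - ∑ θ ∈ U, y θ * M.k θ.2 := by
      intro y
      have hstep : ∀ θ ∈ U, ∑ θ' ∈ U, y θ * x θ' * typePay ct θ θ'
          = (1 - ε') * (∑ θ' ∈ U, y θ * w θ' * condFit ct θ θ')
            + ε' * (∑ θ' ∈ U, y θ * ν.w θ' * condFit ct θ θ')
            - y θ * M.k θ.2 := by
        intro θ _
        have h1 : ∀ θ' ∈ U, y θ * x θ' * typePay ct θ θ'
            = (1 - ε') * (y θ * w θ' * condFit ct θ θ')
              + ε' * (y θ * ν.w θ' * condFit ct θ θ')
              - y θ * M.k θ.2 * x θ' := by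
          intro θ' _
          simp only [typePay]
          rw [hxval θ']
          ring
        rw [Finset.sum_congr rfl h1, Finset.sum_sub_distrib, Finset.sum_add_distrib,
          ← Finset.mul_sum, ← Finset.mul_sum, ← Finset.mul_sum, hx1, mul_one]
      rw [Finset.sum_congr rfl hstep, Finset.sum_sub_distrib, Finset.sum_add_distrib,
        ← Finset.mul_sum, ← Finset.mul_sum]
    rw [hexpand ν.w, hexpand w]
    have hA2 : ∑ θ ∈ U, ∑ θ' ∈ U, ν.w θ * ν.w θ' * condFit ct θ θ' = 0 :=
      sum_sum_antisymm' U (fun θ => ν.w θ) (condFit ct) hanti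
    have hA3 : ∑ θ ∈ U, ∑ θ' ∈ U, w θ * w θ' * condFit ct θ θ' = 0 :=
      sum_sum_antisymm' U (fun θ => w θ) (condFit ct) hanti
    have hA4 : ∑ θ ∈ U, ∑ θ' ∈ U, w θ * ν.w θ' * condFit ct θ θ'
        = -∑ θ ∈ U, ∑ θ' ∈ U, ν.w θ * w θ' * condFit ct θ θ' :=
      sum_swap_antisymm U U (fun θ => w θ) (fun θ => ν.w θ) (condFit ct) hanti
    rw [hA2, hA3, hA4]
    set T := ∑ θ ∈ U, ∑ θ' ∈ U, ν.w θ * w θ' * condFit ct θ θ' with hTdef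
    set Kn := ∑ θ ∈ U, ν.w θ * M.k θ.2 with hKn
    set Km := ∑ θ ∈ U, w θ * M.k θ.2 with hKm
    have hkey : (1 - ε') * T + ε' * 0 - Kn - ((1 - ε') * 0 + ε' * (-T) - Km)
        = T - (Kn - Km) := by ring
    linarith [hT, hkey]
  · -- support description
    intro θ hθ
    exact hsupp_rps θ hθ
  · -- at least two incumbent types
    obtain ⟨i, j, hij, hi, hj⟩ := htwo
    rw [Finset.one_lt_card]
    refine ⟨g i, ?_, g j, ?_, fun h => hij (hg_inj h)⟩
    · rw [hcsupp, Finsupp.mem_support_iff, hw_apply]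
      exact ne_of_gt hi
    · rw [hcsupp, Finsupp.mem_support_iff, hw_apply]
      exact ne_of_gt hj
  · -- behaviour of incumbents
    intro θ hθ θ' hθ'
    constructor
    · intro h
      constructor
      · show (if θ'.2 < θ.2 then pureStrat 1
          else if θ.2 < θ'.2 then pureStrat (0:Fin 3) else uniformStrat (Fin 3)) = pureStrat 1
        rw [if_pos h]
      · show (if θ.2 < θ'.2 then pureStrat 1
          else if θ'.2 < θ.2 then pureStrat (0:Fin 3) else uniformStrat (Fin 3)) = pureStrat 0
        rw [if_neg (asymm h), if_pos h]
    · intro _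
      rfl
end
end
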